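/- arXiv:1406.1240 — 9 statements merged into one kernel-verified Lean document; each statement's English description precedes it below -/
import Mathlib

section
/- Let R be a local ring. The ring T_2(R) of 2×2 upper triangular matrices over R is very clean if and only if the following holds: whenever a, b, v ∈ R satisfy either (both a+1 ∈ J(R) and a−1 ∈ J(R), and b ∈ J(R)) or (a ∈ J(R), and both b+1 ∈ J(R) and b−1 ∈ J(R)), there exists x ∈ R such that ax − xb = v. -/
/-- An element `a` of a ring is *very clean* if there is an idempotent `e` commuting with `a`
such that `a - e` or `a + e` is a unit. -/
def IsVeryClean {R : Type*} [Ring R] (a : R) : Prop :=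
  ∃ e : R, IsIdempotentElem e ∧ a * e = e * a ∧ (IsUnit (a - e) ∨ IsUnit (a + e))

/-- A ring is *very clean* if every element is very clean. -/
def VeryCleanRing (R : Type*) [Ring R] : Prop :=
  ∀ a : R, IsVeryClean a

/-- An element `a` of a ring is *strongly clean* if there is an idempotent `e` commuting with `a`
such that `a - e` is a unit. -/
def IsStronglyClean {R : Type*} [Ring R] (a : R) : Prop :=
  ∃ e : R, IsIdempotentElem e ∧ a * e = e * a ∧ IsUnit (a - e)

/-- A ring is *strongly clean* if every element is strongly clean. -/
def StronglyCleanRing (R : Type*) [Ring R] : Prop :=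
  ∀ a : R, IsStronglyClean a

/-- The ring `T₂(R)` of 2×2 upper triangular matrices over `R`,
as a subring of the full 2×2 matrix ring. -/
def T2 (R : Type*) [Ring R] : Subring (Matrix (Fin 2) (Fin 2) R) where
  carrier := {A | A 1 0 = 0}
  zero_mem' := rfl
  one_mem' := Matrix.one_apply_ne (by decide)
  add_mem' := by
    intro A B hA hB
    simp only [Set.mem_setOf_eq] at *
    simp [Matrix.add_apply, hA, hB]
  neg_mem' := by
    intro A hA
    simp only [Set.mem_setOf_eq] at *
    simp [Matrix.neg_apply, hA]
  mul_mem' := by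
    intro A B hA hB
    simp only [Set.mem_setOf_eq] at *
    simp [Matrix.mul_apply, Fin.sum_univ_two, hA, hB]

theorem mem_T2_iff {R : Type*} [Ring R] {A : Matrix (Fin 2) (Fin 2) R} :
    A ∈ T2 R ↔ A 1 0 = 0 := Iff.rfl

section LocalHelpers
variable {R : Type*} [Ring R] [IsLocalRing R]

lemma isUnit_of_left_inv {x t : R} (h : t * x = 1) : IsUnit x := by
  have hidem : (x * t) * (x * t) = x * t := by
    rw [mul_assoc, ← mul_assoc t, h, one_mul]
  rcases IsLocalRing.isUnit_or_isUnit_of_add_one (a := x * t) (b := 1 - x * t) (by abel) with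
    hu | hu
  · obtain ⟨z, hz⟩ := hu.exists_left_inv
    have hxt1 : x * t = 1 := by
      have := congrArg (z * ·) hidem
      simpa [← mul_assoc, hz] using this
    exact ⟨⟨x, t, hxt1, h⟩, rfl⟩
  · obtain ⟨z, hz⟩ := hu.exists_left_inv
    have hx0 : x = 0 := by
      have h1 : (1 - x * t) * x = 0 := by
        rw [sub_mul, one_mul, mul_assoc, h, mul_one, sub_self]
      calc x = z * ((1 - x * t) * x) := by rw [← mul_assoc, hz, one_mul]
        _ = 0 := by rw [h1, mul_zero]
    exfalso
    exact one_ne_zero (by rw [← h, hx0, mul_zero])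

end LocalHelpers

section LocalHelpers2
variable {R : Type*} [Ring R] [IsLocalRing R]

lemma memJ_iff {x : R} : x ∈ (⊥ : Ideal R).jacobson ↔ ¬ IsUnit x := by
  constructor
  · intro hx hu
    obtain ⟨t, h1⟩ := hu.exists_left_inv
    obtain ⟨z, hz⟩ := Ideal.mem_jacobson_iff.1 hx (-t)
    rw [Ideal.mem_bot] at hz
    have h2 : z * (-t) * x = -z := by
      rw [mul_assoc, neg_mul, h1, mul_neg, mul_one]
    rw [h2, neg_add_cancel, zero_sub, neg_eq_zero] at hz
    exact one_ne_zero hz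
  · intro hx
    rw [Ideal.mem_jacobson_iff]
    intro y
    have hyx : ¬ IsUnit (y * x) := by
      intro h
      obtain ⟨z, hz⟩ := h.exists_left_inv
      exact hx (isUnit_of_left_inv (t := z * y) (by rw [mul_assoc]; exact hz))
    have hu : IsUnit (y * x + 1) := by
      rcases IsLocalRing.isUnit_or_isUnit_of_add_one (a := -(y * x)) (b := y * x + 1)
        (by abel) with h | h
      · exact absurd (by simpa using h.neg) hyx
      · exact h
    obtain ⟨z, hz⟩ := hu.exists_left_inv
    refine ⟨z, ?_⟩
    rw [Ideal.mem_bot, sub_eq_zero, mul_assoc]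
    rw [mul_add, mul_one] at hz
    exact hz

lemma not_memJ_iff {x : R} : x ∉ (⊥ : Ideal R).jacobson ↔ IsUnit x := by
  rw [memJ_iff, not_not]

lemma isUnit_sub_one_of_not_isUnit {x : R} (hx : ¬ IsUnit x) : IsUnit (x - 1) := by
  rcases IsLocalRing.isUnit_or_isUnit_of_add_one (a := x) (b := 1 - x) (by abel) with h | h
  · exact absurd h hx
  · simpa using h.neg

lemma isUnit_add_one_of_not_isUnit {x : R} (hx : ¬ IsUnit x) : IsUnit (x + 1) := by
  rcases IsLocalRing.isUnit_or_isUnit_of_add_one (a := -x) (b := x + 1) (by abel) with h | h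
  · exact absurd (by simpa using h.neg) hx
  · exact h

lemma isUnit_of_sub_one_not_isUnit {x : R} (hx : ¬ IsUnit (x - 1)) : IsUnit x := by
  rcases IsLocalRing.isUnit_or_isUnit_of_add_one (a := x) (b := 1 - x) (by abel) with h | h
  · exact h
  · exact absurd (by simpa using h.neg) hx

lemma idem_zero_or_one {e : R} (he : IsIdempotentElem e) : e = 0 ∨ e = 1 := by
  rcases IsLocalRing.isUnit_or_isUnit_of_add_one (a := e) (b := 1 - e) (by abel) with h | h
  · right
    obtain ⟨z, hz⟩ := h.exists_left_inv
    calc e = z * (e * e) := by rw [← mul_assoc, hz, one_mul]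
      _ = 1 := by rw [he, hz]
  · left
    obtain ⟨z, hz⟩ := h.exists_left_inv
    have h0 : (1 - e) * e = 0 := by rw [sub_mul, one_mul, he, sub_self]
    calc e = z * ((1 - e) * e) := by rw [← mul_assoc, hz, one_mul]
      _ = 0 := by rw [h0, mul_zero]

end LocalHelpers2


section MatrixHelpers
variable {R : Type*} [Ring R]

def Mk (a v b : R) : T2 R :=
  ⟨!![a, v; 0, b], by simp [mem_T2_iff]⟩

@[simp] lemma Mk_coe_00 (a v b : R) : ((Mk a v b : T2 R) : Matrix (Fin 2) (Fin 2) R) 0 0 = a := by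
  simp [Mk]

@[simp] lemma Mk_coe_01 (a v b : R) : ((Mk a v b : T2 R) : Matrix (Fin 2) (Fin 2) R) 0 1 = v := by
  simp [Mk]

@[simp] lemma Mk_coe_11 (a v b : R) : ((Mk a v b : T2 R) : Matrix (Fin 2) (Fin 2) R) 1 1 = b := by
  simp [Mk]

lemma Mk_eta (x : T2 R) : x = Mk ((x : Matrix (Fin 2) (Fin 2) R) 0 0)
    ((x : Matrix (Fin 2) (Fin 2) R) 0 1) ((x : Matrix (Fin 2) (Fin 2) R) 1 1) := by
  apply Subtype.ext
  have h10 : (x : Matrix (Fin 2) (Fin 2) R) 1 0 = 0 := x.2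
  conv_lhs => rw [Matrix.eta_fin_two (x : Matrix (Fin 2) (Fin 2) R)]
  rw [h10]
  rfl

lemma Mk_inj {a v b a' v' b' : R} (h : (Mk a v b : T2 R) = Mk a' v' b') :
    a = a' ∧ v = v' ∧ b = b' := by
  refine ⟨?_, ?_, ?_⟩
  · have := congrArg (fun z : T2 R => (z : Matrix (Fin 2) (Fin 2) R) 0 0) h; simpa using this
  · have := congrArg (fun z : T2 R => (z : Matrix (Fin 2) (Fin 2) R) 0 1) h; simpa using this
  · have := congrArg (fun z : T2 R => (z : Matrix (Fin 2) (Fin 2) R) 1 1) h; simpa using this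

lemma Mk_mul (a v b a' v' b' : R) :
    (Mk a v b : T2 R) * Mk a' v' b' = Mk (a * a') (a * v' + v * b') (b * b') := by
  apply Subtype.ext
  show (!![a, v; 0, b] : Matrix (Fin 2) (Fin 2) R) * !![a', v'; 0, b'] = _
  rw [Matrix.mul_fin_two]
  congr 1 <;> simp

lemma Mk_add (a v b a' v' b' : R) :
    (Mk a v b : T2 R) + Mk a' v' b' = Mk (a + a') (v + v') (b + b') := by
  apply Subtype.ext
  show (!![a, v; 0, b] : Matrix (Fin 2) (Fin 2) R) + !![a', v'; 0, b'] = _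
  ext i j
  fin_cases i <;> fin_cases j <;> simp [Mk]

lemma Mk_sub (a v b a' v' b' : R) :
    (Mk a v b : T2 R) - Mk a' v' b' = Mk (a - a') (v - v') (b - b') := by
  apply Subtype.ext
  show (!![a, v; 0, b] : Matrix (Fin 2) (Fin 2) R) - !![a', v'; 0, b'] = _
  ext i j
  fin_cases i <;> fin_cases j <;> simp [Mk]

lemma Mk_one : (1 : T2 R) = Mk 1 0 1 := by
  apply Subtype.ext
  show (1 : Matrix (Fin 2) (Fin 2) R) = _
  rw [Matrix.one_fin_two]
  rfl

lemma Mk_zero : (0 : T2 R) = Mk 0 0 0 := by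
  apply Subtype.ext
  show (0 : Matrix (Fin 2) (Fin 2) R) = _
  ext i j
  fin_cases i <;> fin_cases j <;> simp [Mk]

end MatrixHelpers

section UnitIdem
variable {R : Type*} [Ring R] [IsLocalRing R]

lemma Mk_isUnit {a v b : R} : IsUnit (Mk a v b : T2 R) ↔ IsUnit a ∧ IsUnit b := by
  constructor
  · intro h
    obtain ⟨w, hw⟩ := h.exists_left_inv
    rw [Mk_eta w, Mk_mul, Mk_one] at hw
    obtain ⟨hw1, -, hw3⟩ := Mk_inj hw
    exact ⟨isUnit_of_left_inv hw1, isUnit_of_left_inv hw3⟩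
  · rintro ⟨ha, hb⟩
    obtain ⟨a', ha1, ha2⟩ : ∃ a' : R, a * a' = 1 ∧ a' * a = 1 :=
      ⟨↑ha.unit⁻¹, ha.mul_val_inv, ha.val_inv_mul⟩
    obtain ⟨b', hb1, hb2⟩ : ∃ b' : R, b * b' = 1 ∧ b' * b = 1 :=
      ⟨↑hb.unit⁻¹, hb.mul_val_inv, hb.val_inv_mul⟩
    rw [isUnit_iff_exists]
    refine ⟨Mk a' (-(a' * v * b')) b', ?_, ?_⟩
    · have hmid : a * -(a' * v * b') + v * b' = 0 := by
        rw [mul_neg, ← mul_assoc, ← mul_assoc, ha1, one_mul, neg_add_cancel]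
      rw [Mk_mul, ha1, hb1, hmid, Mk_one]
    · have hmid : a' * v + -(a' * v * b') * b = 0 := by
        rw [neg_mul, mul_assoc, hb2, mul_one, add_neg_cancel]
      rw [Mk_mul, ha2, hb2, hmid, Mk_one]

lemma Mk_isIdem {e x f : R} :
    IsIdempotentElem (Mk e x f : T2 R) ↔
      IsIdempotentElem e ∧ IsIdempotentElem f ∧ e * x + x * f = x := by
  unfold IsIdempotentElem
  rw [Mk_mul]
  constructor
  · intro h
    obtain ⟨h1, h2, h3⟩ := Mk_inj h
    exact ⟨h1, h3, h2⟩
  · rintro ⟨h1, h2, h3⟩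
    rw [h1, h2, h3]

end UnitIdem


theorem very_clean_T2_iff (R : Type*) [Ring R] [IsLocalRing R] :
    VeryCleanRing (T2 R) ↔
      ∀ a b v : R,
        ((a + 1 ∈ (⊥ : Ideal R).jacobson ∧ a - 1 ∈ (⊥ : Ideal R).jacobson ∧
            b ∈ (⊥ : Ideal R).jacobson) ∨
          (a ∈ (⊥ : Ideal R).jacobson ∧ b + 1 ∈ (⊥ : Ideal R).jacobson ∧
            b - 1 ∈ (⊥ : Ideal R).jacobson)) →
        ∃ x : R, a * x - x * b = v := by
  constructor
  · intro H a b v hyp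
    obtain ⟨E, hE, hcomm, hunit⟩ := H (Mk a v b)
    obtain ⟨e, x, f, rfl⟩ : ∃ e x f, E = Mk e x f := ⟨_, _, _, Mk_eta E⟩
    obtain ⟨he, hf, hx⟩ := Mk_isIdem.1 hE
    rcases hyp with ⟨ha1, ha2, hb⟩ | ⟨ha, hb1, hb2⟩
    · rw [memJ_iff] at ha1 ha2 hb
      rcases idem_zero_or_one he with rfl | rfl <;> rcases idem_zero_or_one hf with rfl | rfl
      · -- e = 0, f = 0 : contradiction, b must be a unit
        exfalso
        rcases hunit with h | h
        · rw [Mk_sub] at h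
          have := (Mk_isUnit.1 h).2
          rw [sub_zero] at this
          exact hb this
        · rw [Mk_add] at h
          have := (Mk_isUnit.1 h).2
          rw [add_zero] at this
          exact hb this
      · -- e = 0, f = 1 : the good case
        rw [Mk_mul, Mk_mul] at hcomm
        obtain ⟨-, hmid, -⟩ := Mk_inj hcomm
        rw [mul_one, zero_mul, zero_add] at hmid
        refine ⟨-x, ?_⟩
        have hv : v = x * b - a * x := by rw [← hmid]; abel
        rw [mul_neg, neg_mul, sub_neg_eq_add, hv]
        abel
      · -- e = 1, f = 0 : contradiction, b must be a unit
        exfalso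
        rcases hunit with h | h
        · rw [Mk_sub] at h
          have := (Mk_isUnit.1 h).2
          rw [sub_zero] at this
          exact hb this
        · rw [Mk_add] at h
          have := (Mk_isUnit.1 h).2
          rw [add_zero] at this
          exact hb this
      · -- e = 1, f = 1 : contradiction, a ∓ 1 must be a unit
        exfalso
        rcases hunit with h | h
        · rw [Mk_sub] at h
          exact ha2 (Mk_isUnit.1 h).1
        · rw [Mk_add] at h
          exact ha1 (Mk_isUnit.1 h).1
    · rw [memJ_iff] at ha hb1 hb2
      rcases idem_zero_or_one he with rfl | rfl <;> rcases idem_zero_or_one hf with rfl | rfl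
      · exfalso
        rcases hunit with h | h
        · rw [Mk_sub] at h
          have := (Mk_isUnit.1 h).1
          rw [sub_zero] at this
          exact ha this
        · rw [Mk_add] at h
          have := (Mk_isUnit.1 h).1
          rw [add_zero] at this
          exact ha this
      · exfalso
        rcases hunit with h | h
        · rw [Mk_sub] at h
          have := (Mk_isUnit.1 h).1
          rw [sub_zero] at this
          exact ha this
        · rw [Mk_add] at h
          have := (Mk_isUnit.1 h).1
          rw [add_zero] at this
          exact ha this
      · -- e = 1, f = 0 : the good case
        rw [Mk_mul, Mk_mul] at hcomm
        obtain ⟨-, hmid, -⟩ := Mk_inj hcomm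
        rw [mul_zero, add_zero, one_mul] at hmid
        refine ⟨x, ?_⟩
        rw [hmid]
        abel
      · exfalso
        rcases hunit with h | h
        · rw [Mk_sub] at h
          exact hb2 (Mk_isUnit.1 h).2
        · rw [Mk_add] at h
          exact hb1 (Mk_isUnit.1 h).2
  · intro H A
    obtain ⟨a, v, b, rfl⟩ : ∃ a v b, A = Mk a v b := ⟨_, _, _, Mk_eta A⟩
    by_cases hua : IsUnit a <;> by_cases hub : IsUnit b
    · exact ⟨0, IsIdempotentElem.zero, by rw [mul_zero, zero_mul],
        Or.inl (by rw [sub_zero]; exact Mk_isUnit.2 ⟨hua, hub⟩)⟩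
    · -- a unit, b not a unit
      by_cases h1 : IsUnit (a - 1)
      · refine ⟨1, IsIdempotentElem.one, by rw [mul_one, one_mul], Or.inl ?_⟩
        rw [Mk_one, Mk_sub]
        exact Mk_isUnit.2 ⟨h1, isUnit_sub_one_of_not_isUnit hub⟩
      by_cases h2 : IsUnit (a + 1)
      · refine ⟨1, IsIdempotentElem.one, by rw [mul_one, one_mul], Or.inr ?_⟩
        rw [Mk_one, Mk_add]
        exact Mk_isUnit.2 ⟨h2, isUnit_add_one_of_not_isUnit hub⟩
      obtain ⟨x, hx⟩ := H a b (-v) (Or.inl ⟨memJ_iff.2 h2, memJ_iff.2 h1, memJ_iff.2 hub⟩)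
      refine ⟨Mk 0 x 1, Mk_isIdem.2 ⟨IsIdempotentElem.zero, IsIdempotentElem.one,
        by rw [zero_mul, mul_one, zero_add]⟩, ?_, Or.inl ?_⟩
      · have hmid : a * x + v = x * b := by
          rw [sub_eq_iff_eq_add] at hx
          rw [hx]; abel
        rw [Mk_mul, Mk_mul]
        simp only [mul_zero, zero_mul, mul_one, one_mul, zero_add]
        rw [hmid]
      · rw [Mk_sub, sub_zero]
        exact Mk_isUnit.2 ⟨hua, isUnit_sub_one_of_not_isUnit hub⟩
    · -- a not a unit, b unit
      by_cases h1 : IsUnit (b - 1)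
      · refine ⟨1, IsIdempotentElem.one, by rw [mul_one, one_mul], Or.inl ?_⟩
        rw [Mk_one, Mk_sub]
        exact Mk_isUnit.2 ⟨isUnit_sub_one_of_not_isUnit hua, h1⟩
      by_cases h2 : IsUnit (b + 1)
      · refine ⟨1, IsIdempotentElem.one, by rw [mul_one, one_mul], Or.inr ?_⟩
        rw [Mk_one, Mk_add]
        exact Mk_isUnit.2 ⟨isUnit_add_one_of_not_isUnit hua, h2⟩
      obtain ⟨x, hx⟩ := H a b v (Or.inr ⟨memJ_iff.2 hua, memJ_iff.2 h2, memJ_iff.2 h1⟩)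
      refine ⟨Mk 1 x 0, Mk_isIdem.2 ⟨IsIdempotentElem.one, IsIdempotentElem.zero,
        by rw [one_mul, mul_zero, add_zero]⟩, ?_, Or.inl ?_⟩
      · have hmid : a * x = v + x * b := by
          rw [sub_eq_iff_eq_add] at hx
          exact hx
        rw [Mk_mul, Mk_mul]
        simp only [mul_zero, zero_mul, mul_one, one_mul, add_zero]
        rw [hmid]
      · rw [Mk_sub, sub_zero]
        exact Mk_isUnit.2 ⟨isUnit_sub_one_of_not_isUnit hua, hub⟩
    · refine ⟨1, IsIdempotentElem.one, by rw [mul_one, one_mul], Or.inl ?_⟩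
      rw [Mk_one, Mk_sub]
      exact Mk_isUnit.2 ⟨isUnit_sub_one_of_not_isUnit hua, isUnit_sub_one_of_not_isUnit hub⟩
end

section
/- Let R be a commutative ring having exactly two maximal ideals and suppose 2 is a unit in R. Then R is very clean. -/
theorem very_clean_of_two_maximal_ideals (R : Type*) [CommRing R]
    (hmax : ∃ M N : Ideal R, M.IsMaximal ∧ N.IsMaximal ∧ M ≠ N ∧
      ∀ P : Ideal R, P.IsMaximal → P = M ∨ P = N)
    (h2 : IsUnit (2 : R)) :
    VeryCleanRing R := by
  obtain ⟨M, N, hM, hN, hMN, hclass⟩ := hmax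
  intro a
  by_cases ha : IsUnit a
  · exact ⟨0, by simp [IsIdempotentElem], by ring, Or.inl (by simpa using ha)⟩
  · refine ⟨1, by simp [IsIdempotentElem], by ring, ?_⟩
    by_contra h
    push_neg at h
    obtain ⟨h1, h2'⟩ := h
    obtain ⟨P, hP, haP⟩ := exists_max_ideal_of_mem_nonunits (mem_nonunits_iff.mpr ha)
    obtain ⟨P1, hP1, h1P⟩ := exists_max_ideal_of_mem_nonunits (mem_nonunits_iff.mpr h1)
    obtain ⟨P2, hP2, h2P⟩ := exists_max_ideal_of_mem_nonunits (mem_nonunits_iff.mpr h2')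
    have hPP1 : P ≠ P1 := by
      intro he
      have hone : (1 : R) ∈ P := by
        have := P.sub_mem haP (he ▸ h1P)
        simpa using this
      exact hP.ne_top ((Ideal.eq_top_iff_one P).mpr hone)
    have hPP2 : P ≠ P2 := by
      intro he
      have hone : (1 : R) ∈ P := by
        have := P.sub_mem (he ▸ h2P) haP
        simpa using this
      exact hP.ne_top ((Ideal.eq_top_iff_one P).mpr hone)
    have hP12 : P1 = P2 := by
      rcases hclass P hP with hp | hp <;>
        rcases hclass P1 hP1 with hq | hq <;>
        rcases hclass P2 hP2 with hr | hr <;>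
        simp_all
    have h2mem : (2 : R) ∈ P1 := by
      have := P1.sub_mem (hP12 ▸ h2P) h1P
      have h22 : a + 1 - (a - 1) = (2 : R) := by ring
      rwa [h22] at this
    exact hP1.ne_top (P1.eq_top_of_isUnit_mem h2mem h2)
end

section
/- Let p and q be distinct primes, both different from 2. Then the ring ℤ_(p) ∩ ℤ_(q) (a subring of ℚ) is very clean, but it is not strongly clean. -/
/-- For a prime `p`, the localization `ℤ_(p)` of `ℤ` at `p`, realized as the subring of `ℚ`
consisting of all fractions `m / n` with `m, n ∈ ℤ` and `p ∤ n`. -/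
def ZLoc (p : ℕ) (hp : p.Prime) : Subring ℚ where
  carrier := {x : ℚ | ∃ m n : ℤ, ¬ ((p : ℤ) ∣ n) ∧ x = m / n}
  zero_mem' := ⟨0, 1, fun h => hp.one_lt.ne' (Nat.dvd_one.mp (by exact_mod_cast h)), by simp⟩
  one_mem' := ⟨1, 1, fun h => hp.one_lt.ne' (Nat.dvd_one.mp (by exact_mod_cast h)), by simp⟩
  add_mem' := by
    rintro x y ⟨m, n, hn, rfl⟩ ⟨m', n', hn', rfl⟩
    refine ⟨m * n' + m' * n, n * n', fun h => ?_, ?_⟩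
    · rcases (Int.Prime.dvd_mul' (by exact_mod_cast hp) h) with h | h
      exacts [hn h, hn' h]
    · have h0 : (n : ℚ) ≠ 0 := Int.cast_ne_zero.mpr (fun h0 => hn (h0 ▸ dvd_zero _))
      have h0' : (n' : ℚ) ≠ 0 := Int.cast_ne_zero.mpr (fun h0 => hn' (h0 ▸ dvd_zero _))
      field_simp
      push_cast
      ring
  neg_mem' := by
    rintro x ⟨m, n, hn, rfl⟩
    exact ⟨-m, n, hn, by push_cast; ring⟩
  mul_mem' := by
    rintro x y ⟨m, n, hn, rfl⟩ ⟨m', n', hn', rfl⟩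
    refine ⟨m * m', n * n', fun h => ?_, ?_⟩
    · rcases (Int.Prime.dvd_mul' (by exact_mod_cast hp) h) with h | h
      exacts [hn h, hn' h]
    · push_cast
      rw [div_mul_div_comm]

/-!
A subring of `ℚ` is a domain, so its only idempotents are `0` and `1`: an element `x` is very
clean iff one of `x - 1`, `x`, `x + 1` is a unit, and strongly clean iff `x` or `x - 1` is.
An element of `R = ℤ_(p) ∩ ℤ_(q)` is a unit iff its residues modulo `p` and modulo `q` are both
nonzero. Since `p, q ≠ 2`, each of the two residue maps kills at most one of `x - 1, x, x + 1`,
so one of the three survives both. On the other hand, an integer `a` with `a ≡ 0 mod p` and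
`a ≡ 1 mod q` (Chinese remainder theorem) makes both `a` and `a - 1` non-units.
-/

lemma IsVeryClean.of_isUnit {R : Type*} [Ring R] {a : R}
    (h : IsUnit (a - 1) ∨ IsUnit a ∨ IsUnit (a + 1)) : IsVeryClean a := by
  rcases h with h | h | h
  · exact ⟨1, .one, by simp, .inl h⟩
  · exact ⟨0, .zero, by simp, .inl (by simpa using h)⟩
  · exact ⟨1, .one, by simp, .inr h⟩

lemma isStronglyClean_iff {R : Type*} [Ring R] [IsDomain R] {a : R} :
    IsStronglyClean a ↔ IsUnit a ∨ IsUnit (a - 1) := by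
  constructor
  · rintro ⟨e, he, -, hu⟩
    rcases IsIdempotentElem.iff_eq_zero_or_one.mp he with rfl | rfl
    · exact .inl (by simpa using hu)
    · exact .inr hu
  · rintro (h | h)
    · exact ⟨0, .zero, by simp, by simpa using h⟩
    · exact ⟨1, .one, by simp, h⟩

lemma Subring.isUnit_iff_inv_mem {K : Type*} [Field K] {S : Subring K} {x : S} :
    IsUnit x ↔ (x : K) ≠ 0 ∧ (x : K)⁻¹ ∈ S := by
  refine ⟨fun h => ⟨(h.map S.subtype).ne_zero, ?_⟩, fun ⟨hx, hinv⟩ => ?_⟩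
  · obtain ⟨y, hy⟩ := h.exists_right_inv
    rw [inv_eq_of_mul_eq_one_right (congrArg Subtype.val hy)]
    exact y.2
  · exact IsUnit.of_mul_eq_one (a := x) ⟨_, hinv⟩ (Subtype.ext (mul_inv_cancel₀ hx))

-- The differences of `r - 1`, `r`, `r + 1` are `1`, `1`, `2`, so at most one of them vanishes.
lemma sub_one_or_self_or_add_one_ne_zero_pair {F G : Type*} [CommRing F] [CommRing G]
    (hF : (2 : F) ≠ 0) (hG : (2 : G) ≠ 0) (r : F) (s : G) :
    (r - 1 ≠ 0 ∧ s - 1 ≠ 0) ∨ (r ≠ 0 ∧ s ≠ 0) ∨ (r + 1 ≠ 0 ∧ s + 1 ≠ 0) := by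
  grind

namespace ZLoc

section Residue

variable {p : ℕ} [hp : Fact p.Prime]

lemma den_cast_ne_zero {x : ℚ} (hx : x ∈ ZLoc p hp.out) : (x.den : ZMod p) ≠ 0 := by
  obtain ⟨m, n, hn, rfl⟩ := hx
  rw [Ne, ZMod.natCast_eq_zero_iff]
  intro h
  refine hn ((Int.natCast_dvd_natCast.mpr h).trans ?_)
  rw [← Rat.divInt_eq_div]
  exact Rat.den_dvd m n

variable (p) in
def residue : ZLoc p hp.out →+* ZMod p where
  toFun x := ((x : ℚ) : ZMod p)
  map_one' := Rat.cast_one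
  map_mul' x y := Rat.cast_mul_of_ne_zero (den_cast_ne_zero x.2) (den_cast_ne_zero y.2)
  map_zero' := Rat.cast_zero
  map_add' x y := Rat.cast_add_of_ne_zero (den_cast_ne_zero x.2) (den_cast_ne_zero y.2)

lemma residue_apply (x : ZLoc p hp.out) : residue p x = ((x : ℚ) : ZMod p) := rfl

lemma inv_mem_of_residue_ne_zero {x : ZLoc p hp.out} (hx : residue p x ≠ 0) :
    (x : ℚ)⁻¹ ∈ ZLoc p hp.out := by
  have hnum : ¬ (p : ℤ) ∣ (x : ℚ).num := by
    rw [residue_apply, Rat.cast_def, div_ne_zero_iff, Ne, ZMod.intCast_zmod_eq_zero_iff_dvd] at hx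
    exact hx.1
  refine ⟨(x : ℚ).den, (x : ℚ).num, hnum, ?_⟩
  rw [← inv_div, Int.cast_natCast, Rat.num_div_den]

end Residue

section Inf

variable {p q : ℕ} [hp : Fact p.Prime] [hq : Fact q.Prime]

lemma isUnit_inf_iff (x : ↥(ZLoc p hp.out ⊓ ZLoc q hq.out)) :
    IsUnit x ↔ (residue p).comp (Subring.inclusion inf_le_left) x ≠ 0 ∧
      (residue q).comp (Subring.inclusion inf_le_right) x ≠ 0 := by
  refine ⟨fun h => ⟨(h.map _).ne_zero, (h.map _).ne_zero⟩, fun ⟨hxp, hxq⟩ => ?_⟩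
  refine Subring.isUnit_iff_inv_mem.mpr
    ⟨fun hx0 => hxp ?_, inv_mem_of_residue_ne_zero hxp, inv_mem_of_residue_ne_zero hxq⟩
  simp [residue_apply, hx0]

lemma veryCleanRing_inf (hp2 : p ≠ 2) (hq2 : q ≠ 2) :
    VeryCleanRing ↥(ZLoc p hp.out ⊓ ZLoc q hq.out) := by
  intro x
  apply IsVeryClean.of_isUnit
  simp only [isUnit_inf_iff, map_sub, map_add, map_one]
  exact sub_one_or_self_or_add_one_ne_zero_pair
    (Ring.two_ne_zero (by rwa [ZMod.ringChar_zmod_n]))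
    (Ring.two_ne_zero (by rwa [ZMod.ringChar_zmod_n])) _ _

lemma not_stronglyCleanRing_inf (hpq : p ≠ q) :
    ¬ StronglyCleanRing ↥(ZLoc p hp.out ⊓ ZLoc q hq.out) := by
  obtain ⟨u, v, huv⟩ : IsCoprime (p : ℤ) q :=
    Nat.isCoprime_iff_coprime.mpr ((Nat.coprime_primes hp.out hq.out).mpr hpq)
  have ha_p : ((u * p : ℤ) : ZMod p) = 0 := by simp
  have ha_q : ((u * p : ℤ) : ZMod q) - 1 = 0 := by
    have := congrArg (Int.cast : ℤ → ZMod q) huv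
    push_cast at this ⊢
    rw [ZMod.natCast_self] at this
    linear_combination this
  intro h
  have ha := isStronglyClean_iff.mp (h ((u * p : ℤ) : ↥(ZLoc p hp.out ⊓ ZLoc q hq.out)))
  simp only [isUnit_inf_iff, map_sub, map_intCast, map_one] at ha
  tauto

end Inf

end ZLoc

theorem ZLoc_inter_very_clean_not_strongly_clean (p q : ℕ) (hp : p.Prime) (hq : q.Prime)
    (hpq : p ≠ q) (hp2 : p ≠ 2) (hq2 : q ≠ 2) :
    VeryCleanRing ↥(ZLoc p hp ⊓ ZLoc q hq) ∧
    ¬ StronglyCleanRing ↥(ZLoc p hp ⊓ ZLoc q hq) := by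
  have := Fact.mk hp
  have := Fact.mk hq
  exact ⟨ZLoc.veryCleanRing_inf hp2 hq2, ZLoc.not_stronglyCleanRing_inf hpq⟩
end

section
/- Let R be a ring with 2 ∈ J(R) and let a ∈ R. Then a is very clean if and only if a is strongly clean. -/
/-! In a ring with `2 ∈ J(R)`, `a - e = (a + e) - 2e` differs from `a + e` by an element of the
Jacobson radical, and perturbing a unit by an element of `J(R)` leaves a unit. -/

section

variable {R : Type*} [Ring R]

/-- The noncommutative form of `Ideal.isUnit_of_sub_one_mem_jacobson_bot`. -/
theorem isUnit_of_sub_one_mem_jacobson_bot {r : R} (hr : r - 1 ∈ (⊥ : Ideal R).jacobson) :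
    IsUnit r := by
  obtain ⟨s, hs⟩ := Ideal.exists_mul_sub_mem_of_sub_one_mem_jacobson r hr
  rw [Ideal.mem_bot, sub_eq_zero] at hs
  -- `s` is again `1` modulo `J(R)`, so it has a left inverse too, which must be `r`.
  have hs1 : s - 1 ∈ (⊥ : Ideal R).jacobson := by
    have : s - 1 = -(s * (r - 1)) := by rw [mul_sub, hs, mul_one, neg_sub]
    exact this ▸ neg_mem (Ideal.mul_mem_left _ s hr)
  obtain ⟨t, ht⟩ := Ideal.exists_mul_sub_mem_of_sub_one_mem_jacobson s hs1
  rw [Ideal.mem_bot, sub_eq_zero] at ht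
  have hrs : r * s = 1 := left_inv_eq_right_inv ht hs ▸ ht
  exact isUnit_iff_exists.mpr ⟨s, hrs, hs⟩

theorem IsUnit.sub_mem_jacobson_bot {u j : R} (hu : IsUnit u)
    (hj : j ∈ (⊥ : Ideal R).jacobson) : IsUnit (u - j) := by
  obtain ⟨v, rfl⟩ := hu
  have h : (↑v⁻¹ * (↑v - j) : R) - 1 = -(↑v⁻¹ * j) := by
    rw [mul_sub, Units.inv_mul, sub_sub_cancel_left]
  rw [← Units.isUnit_units_mul v⁻¹]
  exact isUnit_of_sub_one_mem_jacobson_bot (h ▸ neg_mem (Ideal.mul_mem_left _ _ hj))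

theorem isUnit_sub_of_isUnit_add_of_two_mem_jacobson (h2 : (2 : R) ∈ (⊥ : Ideal R).jacobson)
    {a b : R} (h : IsUnit (a + b)) : IsUnit (a - b) := by
  have : a - b = a + b - b * 2 := by rw [mul_two]; abel
  exact this ▸ h.sub_mem_jacobson_bot (Ideal.mul_mem_left _ b h2)

theorem IsStronglyClean.isVeryClean {a : R} (h : IsStronglyClean a) : IsVeryClean a :=
  let ⟨e, he, hae, hu⟩ := h
  ⟨e, he, hae, Or.inl hu⟩

end

theorem very_clean_iff_strongly_clean_of_two_mem_jacobson (R : Type*) [Ring R]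
    (h2 : (2 : R) ∈ (⊥ : Ideal R).jacobson) (a : R) :
    IsVeryClean a ↔ IsStronglyClean a := by
  refine ⟨?_, IsStronglyClean.isVeryClean⟩
  rintro ⟨e, he, hae, hsub | hadd⟩
  · exact ⟨e, he, hae, hsub⟩
  · exact ⟨e, he, hae, isUnit_sub_of_isUnit_add_of_two_mem_jacobson h2 hadd⟩
end

section
/- Let R be a commutative local ring and let φ ∈ M_2(R). Then φ is very clean in M_2(R) if and only if either 2 is a unit in R, or φ is strongly clean in M_2(R). -/
theorem M2_very_clean_iff (R : Type*) [CommRing R] [IsLocalRing R]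
    (φ : Matrix (Fin 2) (Fin 2) R) :
    IsVeryClean φ ↔ IsUnit (2 : R) ∨ IsStronglyClean φ := by
  constructor
  · rintro ⟨e, he, hcomm, hu | hu⟩
    · exact Or.inr ⟨e, he, hcomm, hu⟩
    · by_cases h2 : IsUnit (2 : R)
      · exact Or.inl h2
      right
      refine ⟨e, he, hcomm, ?_⟩
      rw [Matrix.isUnit_iff_isUnit_det] at hu ⊢
      have key : Matrix.det (φ + e) = Matrix.det (φ - e) +
          2 * (φ 0 0 * e 1 1 + e 0 0 * φ 1 1 - φ 0 1 * e 1 0 - e 0 1 * φ 1 0) := by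
        simp only [Matrix.det_fin_two, Matrix.add_apply, Matrix.sub_apply]
        ring
      rw [key] at hu
      rcases IsLocalRing.isUnit_or_isUnit_of_isUnit_add hu with h | h
      · exact h
      · exact absurd (isUnit_of_mul_isUnit_left h) h2
  · rintro (h2 | ⟨e, he, hc, hu⟩)
    · by_cases hA : IsUnit (Matrix.det (φ - 1))
      · exact ⟨1, IsIdempotentElem.one, by rw [mul_one, one_mul],
          Or.inl ((Matrix.isUnit_iff_isUnit_det _).mpr hA)⟩
      by_cases hB : IsUnit (Matrix.det (φ + 1))
      · exact ⟨1, IsIdempotentElem.one, by rw [mul_one, one_mul],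
          Or.inr ((Matrix.isUnit_iff_isUnit_det _).mpr hB)⟩
      have hsum : ¬ IsUnit (Matrix.det (φ - 1) + Matrix.det (φ + 1)) := fun h =>
        (IsLocalRing.isUnit_or_isUnit_of_isUnit_add h).elim hA hB
      have heq : Matrix.det (φ - 1) + Matrix.det (φ + 1) = 2 * (1 + Matrix.det φ) := by
        simp only [Matrix.det_fin_two, Matrix.sub_apply, Matrix.add_apply, Matrix.one_apply]
        norm_num
        ring
      rw [heq] at hsum
      have h1d : ¬ IsUnit (1 + Matrix.det φ) := fun h => hsum (h2.mul h)
      rcases IsLocalRing.isUnit_or_isUnit_one_sub_self (1 + Matrix.det φ) with h | h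
      · exact absurd h h1d
      · have hd : IsUnit (Matrix.det φ) := by
          have : (1 : R) - (1 + Matrix.det φ) = -(Matrix.det φ) := by ring
          rw [this] at h
          simpa using h.neg
        exact ⟨0, IsIdempotentElem.zero, by rw [mul_zero, zero_mul],
          Or.inl (by rw [sub_zero]; exact (Matrix.isUnit_iff_isUnit_det _).mpr hd)⟩
    · exact ⟨e, he, hc, Or.inl hu⟩
end

section
/- Let p be a prime with p ≠ 2. Then the matrix [[1, p], [−1, 0]] ∈ M_2(ℤ_(p)) is very clean, but it is not strongly clean. -/
/-!
Let `A = !![1, p; -1, 0]`. Its characteristic polynomial `X² - X + p` has negative discriminant,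
so it has no rational root. A matrix commuting with `A` has the shape `!![a, -p c; c, a + c]`,
and if it is idempotent with `c ≠ 0` then `-a / c` is a root of that polynomial; hence `0` and `1`
are the only idempotents commuting with `A`. Both `A` and `A - 1` have determinant `p`, which is
not a unit of `ℤ_(p)`, so `A` is not strongly clean, whereas `det (A + 1) = p + 2` is a unit
since `p ≠ 2`.
-/

namespace Matrix

variable {R : Type*} [CommRing R]

lemma exists_eq_of_commute_companion {t n : R} {X : Matrix (Fin 2) (Fin 2) R}
    (h : Commute X !![t, n; -1, 0]) : ∃ a c : R, X = !![a, -n * c; c, a + t * c] := by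
  rw [X.eta_fin_two] at h ⊢
  simp only [Commute, SemiconjBy, mul_fin_two, ← ext_iff, Fin.forall_fin_two, of_apply,
    cons_val_zero, cons_val_one, cons_val', empty_val', cons_val_fin_one] at h
  obtain ⟨⟨h00, -⟩, h10, -⟩ := h
  refine ⟨X 0 0, X 1 0, ?_⟩
  rw [show X 0 1 = -n * X 1 0 by linear_combination -h00,
    show X 1 1 = X 0 0 + t * X 1 0 by linear_combination -h10]

lemma eq_zero_or_eq_one_of_isIdempotentElem_of_commute_companion [IsDomain R] {t n : R}
    (hroot : ∀ x y : R, x ^ 2 - t * x * y + n * y ^ 2 = 0 → y = 0)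
    {e : Matrix (Fin 2) (Fin 2) R} (he : IsIdempotentElem e) (hc : Commute e !![t, n; -1, 0]) :
    e = 0 ∨ e = 1 := by
  obtain ⟨a, c, rfl⟩ := exists_eq_of_commute_companion hc
  simp only [IsIdempotentElem, mul_fin_two, ← ext_iff, Fin.forall_fin_two, of_apply,
    cons_val_zero, cons_val_one, cons_val', empty_val', cons_val_fin_one] at he
  obtain ⟨⟨h00, -⟩, h10, -⟩ := he
  have hc0 : c = 0 := by
    have hform : c * ((-a) ^ 2 - t * (-a) * c + n * c ^ 2) = 0 := by
      linear_combination a * h10 - c * h00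
    exact (mul_eq_zero.mp hform).elim id (hroot _ _)
  subst hc0
  have ha : IsIdempotentElem a := by
    simpa only [IsIdempotentElem, mul_zero, neg_zero, zero_mul, add_zero] using h00
  rcases IsIdempotentElem.iff_eq_zero_or_one.mp ha with rfl | rfl
  · left; ext i j; fin_cases i <;> fin_cases j <;> simp
  · right; ext i j; fin_cases i <;> fin_cases j <;> simp

end Matrix

lemma eq_zero_of_sq_sub_mul_mul_add_mul_sq_eq_zero {R : Type*} [CommRing R] [LinearOrder R]
    [IsStrictOrderedRing R] {t n x y : R} (hdisc : t ^ 2 < 4 * n)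
    (h : x ^ 2 - t * x * y + n * y ^ 2 = 0) : y = 0 := by
  have hsq : (4 * n - t ^ 2) * y ^ 2 = -(2 * x - t * y) ^ 2 := by linear_combination 4 * h
  have : y ^ 2 ≤ 0 := by nlinarith [sq_nonneg (2 * x - t * y), sq_nonneg y]
  exact pow_eq_zero_iff two_ne_zero |>.mp (le_antisymm this (sq_nonneg y))

lemma not_isStronglyClean_of_forall_commute_isIdempotentElem {R : Type*} [Ring R] {a : R}
    (hidem : ∀ e : R, IsIdempotentElem e → Commute a e → e = 0 ∨ e = 1)
    (ha : ¬IsUnit a) (ha₁ : ¬IsUnit (a - 1)) : ¬IsStronglyClean a := by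
  rintro ⟨e, he, hcomm, hunit⟩
  rcases hidem e he hcomm with rfl | rfl
  · exact ha (by simpa using hunit)
  · exact ha₁ hunit

namespace ZLoc

variable {p : ℕ} {hp : p.Prime}

lemma isUnit_intCast_iff {m : ℤ} : IsUnit (m : ZLoc p hp) ↔ ¬(p : ℤ) ∣ m := by
  constructor
  · rintro hu ⟨k, rfl⟩
    obtain ⟨y, hy⟩ := hu.exists_right_inv
    obtain ⟨a, b, hb, hab⟩ := y.2
    have hb0 : (b : ℚ) ≠ 0 := Int.cast_ne_zero.mpr fun h => hb (h ▸ dvd_zero _)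
    have hy' : ((p * k : ℤ) : ℚ) * (a / b) = 1 := by
      rw [← hab]; exact_mod_cast congrArg Subtype.val hy
    have : p * k * a = b := by
      field_simp at hy'; exact_mod_cast hy'
    exact hb ⟨k * a, by rw [← this]; ring⟩
  · intro hm
    have hm0 : (m : ℚ) ≠ 0 := Int.cast_ne_zero.mpr fun h => hm (h ▸ dvd_zero _)
    refine IsUnit.of_mul_eq_one (⟨(m : ℚ)⁻¹, 1, m, hm, by simp⟩ : ZLoc p hp) (Subtype.ext ?_)
    simp [hm0]

lemma not_isUnit_natCast_self : ¬IsUnit (p : ZLoc p hp) := by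
  simpa using (isUnit_intCast_iff (hp := hp) (m := p)).not

end ZLoc

theorem example_matrix_very_clean_not_strongly_clean (p : ℕ) (hp : p.Prime) (hp2 : p ≠ 2) :
    IsVeryClean (!![(1 : ↥(ZLoc p hp)), (p : ↥(ZLoc p hp)); -1, 0]) ∧
    ¬ IsStronglyClean (!![(1 : ↥(ZLoc p hp)), (p : ↥(ZLoc p hp)); -1, 0]) := by
  have hdet_add_one : (!![1, (p : ZLoc p hp); -1, 0] + 1).det = ((p + 2 : ℤ) : ZLoc p hp) := by
    simp [Matrix.one_fin_two, Matrix.det_fin_two_of, add_comm, one_add_one_eq_two]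
  have hdet_sub_one : (!![1, (p : ZLoc p hp); -1, 0] - 1).det = p := by
    simp [Matrix.one_fin_two, Matrix.det_fin_two_of]
  have hdet : (!![1, (p : ZLoc p hp); -1, 0]).det = p := by
    simp [Matrix.det_fin_two_of]
  refine ⟨⟨1, .one, by simp, Or.inr ?_⟩, ?_⟩
  · rw [Matrix.isUnit_iff_isUnit_det, hdet_add_one, ZLoc.isUnit_intCast_iff, dvd_add_self_left]
    exact_mod_cast fun h => hp2 ((Nat.prime_dvd_prime_iff_eq hp Nat.prime_two).mp h)
  · have hdisc : (1 : ZLoc p hp) ^ 2 < 4 * p := by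
      have := hp.two_le
      exact_mod_cast (by omega : 1 ^ 2 < 4 * p)
    refine not_isStronglyClean_of_forall_commute_isIdempotentElem
      (fun e he hc => Matrix.eq_zero_or_eq_one_of_isIdempotentElem_of_commute_companion
        (fun _ _ => eq_zero_of_sq_sub_mul_mul_add_mul_sq_eq_zero hdisc) he hc.symm) ?_ ?_
    · rw [Matrix.isUnit_iff_isUnit_det, hdet]
      exact ZLoc.not_isUnit_natCast_self
    · rw [Matrix.isUnit_iff_isUnit_det, hdet_sub_one]
      exact ZLoc.not_isUnit_natCast_self
end

section
/- Let R be a commutative local ring, let n ≥ 2, and let h ∈ R[t] be a monic polynomial of degree n. Then the following are equivalent: (1) every matrix φ ∈ M_n(R) with characteristic polynomial equal to h is very clean; (2) there exists a factorization h = h_0 h_1 such that h_0 and h_1 generate the unit ideal of R[t], h_0 is monic with h_0(0) a unit, and h_1 is monic with h_1(1) a unit or h_1(−1) a unit. -/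
/-!
If `h = h₀ h₁` with `u h₀ + v h₁ = 1` and `h(φ) = 0`, then `e = (u h₀)(φ)` is an idempotent
polynomial in `φ`, and `φ - s e = (X - s u h₀)(φ)` is a unit for `s = ±1` as soon as `X - s u h₀`
is coprime to `h`: modulo `h₀` it is `X`, modulo `h₁` it is `X - s`, and these are coprime to
`h₀`, `h₁` exactly when `h₀(0)`, `h₁(s)` are units.

Conversely, multiplication by the root `θ` of `h` on `A = R[t]/(h)` is a matrix with characteristic
polynomial `h` whose commutant consists of multiplications, so `θ` is very clean in `A`. An
idempotent `ε` of `A` splits `A = (1 - ε)A ⊕ εA` into `θ`-stable summands, free since `R` is local;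
their characteristic polynomials `h₀, h₁` multiply to `h`, and Cayley–Hamilton on each summand
shows that `h₀` divides a lift `q` of `ε` and `h₁` divides `1 - q`. This gives comaximality, and
the unit `θ - s ε` yields the units `h₀(0)` and `h₁(s)`.
-/

open Polynomial

namespace Module.End

open LinearMap

variable {R M : Type*} [CommRing R] [AddCommGroup M] [Module R M]

theorem aeval_restrict_apply {f : End R M} {p : Submodule R M} (hp : ∀ x ∈ p, f x ∈ p)
    (P : R[X]) (x : p) : (aeval (f.restrict hp) P x : M) = aeval f P x := by
  induction P using Polynomial.induction_on' with
  | add P Q hP hQ => simp [hP, hQ]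
  | monomial n c => simp [aeval_monomial, pow_restrict n hp, restrict_apply]

theorem aeval_charpoly_restrict_apply {f : End R M} {p : Submodule R M} [Module.Free R p]
    [Module.Finite R p] (hp : ∀ x ∈ p, f x ∈ p) {x : M} (hx : x ∈ p) :
    aeval f (f.restrict hp).charpoly x = 0 := by
  rw [← aeval_restrict_apply hp _ ⟨x, hx⟩, aeval_self_charpoly, LinearMap.zero_apply,
    Submodule.coe_zero]

theorem conj_prodMap_restrict {p q : Submodule R M} (hpq : IsCompl p q) {f : End R M}
    (hp : ∀ x ∈ p, f x ∈ p) (hq : ∀ x ∈ q, f x ∈ q) :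
    (p.prodEquivOfIsCompl q hpq).conj ((f.restrict hp).prodMap (f.restrict hq)) = f := by
  rw [LinearEquiv.conj_apply, LinearEquiv.comp_toLinearMap_symm_eq]
  ext x <;> simp

theorem charpoly_eq_mul_restrict [Module.Free R M] [Module.Finite R M] {p q : Submodule R M}
    (hpq : IsCompl p q) [Module.Free R p] [Module.Finite R p] [Module.Free R q]
    [Module.Finite R q] {f : End R M} (hp : ∀ x ∈ p, f x ∈ p) (hq : ∀ x ∈ q, f x ∈ q) :
    f.charpoly = (f.restrict hp).charpoly * (f.restrict hq).charpoly := by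
  rw [← charpoly_prodMap, ← (p.prodEquivOfIsCompl q hpq).charpoly_conj, conj_prodMap_restrict]

theorem projective_range_of_isIdempotentElem [Module.Projective R M] {e : End R M}
    (he : IsIdempotentElem e) : Module.Projective R (range e) :=
  .of_split (range e).subtype e.rangeRestrict <| by
    ext ⟨_, y, rfl⟩
    simp [← mul_apply, he.eq]

theorem exists_charpoly_eq_mul_of_isIdempotentElem [IsLocalRing R] [Module.Free R M]
    [Module.Finite R M] {e f : End R M} (he : IsIdempotentElem e) (hef : Commute e f) :
    ∃ p₀ p₁ : R[X], p₀.Monic ∧ p₁.Monic ∧ f.charpoly = p₀ * p₁ ∧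
      aeval f p₀ * (1 - e) = 0 ∧ aeval f p₁ * e = 0 := by
  have invariant {g : End R M} (hg : Commute g f) : ∀ x ∈ range g, f x ∈ range g := by
    rintro _ ⟨y, rfl⟩
    exact ⟨f y, LinearMap.congr_fun hg y⟩
  have free {g : End R M} (hg : IsIdempotentElem g) : Module.Free R (range g) :=
    have := projective_range_of_isIdempotentElem hg
    Module.free_of_flat_of_isLocalRing
  have := free he
  have := free he.one_sub
  have hc : IsCompl (range (1 - e)) (range e) := by
    rw [← LinearMap.IsIdempotentElem.ker_eq_range_one_sub he]
    exact (LinearMap.IsIdempotentElem.isCompl he).symm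
  have h₀ := invariant ((Commute.one_left f).sub_left hef)
  have h₁ := invariant hef
  refine ⟨_, _, charpoly_monic _, charpoly_monic _, charpoly_eq_mul_restrict hc h₀ h₁, ?_, ?_⟩ <;>
    ext x <;> exact aeval_charpoly_restrict_apply _ (mem_range_self _ x)

end Module.End

namespace Polynomial

variable {R : Type*} [CommRing R]

theorem isCoprime_X_sub_C_iff_isUnit_eval {p : R[X]} {c : R} :
    IsCoprime (X - C c) p ↔ IsUnit (p.eval c) := by
  constructor
  · rintro ⟨u, v, huv⟩
    exact .of_mul_eq_one_right _ (by simpa using congrArg (eval c) huv)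
  · intro hu
    obtain ⟨g, hg⟩ := X_sub_C_dvd_sub_C_eval (a := c) (p := p)
    have hC : C (p.eval c) * C (↑hu.unit⁻¹ : R) = 1 := by rw [← C_mul, hu.mul_val_inv, C_1]
    exact ⟨-(g * C (↑hu.unit⁻¹ : R)), C (↑hu.unit⁻¹ : R),
      by linear_combination C (↑hu.unit⁻¹ : R) * hg + hC⟩

theorem isCoprime_X_sub_C_mul_mul_iff {p₀ p₁ q : R[X]} (s : R) (h₀ : p₀ ∣ q) (h₁ : p₁ ∣ 1 - q) :
    IsCoprime (X - C s * q) (p₀ * p₁) ↔ IsUnit (p₀.eval 0) ∧ IsUnit (p₁.eval s) := by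
  obtain ⟨k₀, hk₀⟩ := h₀
  obtain ⟨k₁, hk₁⟩ := h₁
  have e₀ : X - C s * q = X - C 0 + p₀ * (-(C s * k₀)) := by rw [hk₀, C_0]; ring
  have e₁ : X - C s * q = X - C s + p₁ * (C s * k₁) := by linear_combination C s * hk₁
  rw [IsCoprime.mul_right_iff, ← isCoprime_X_sub_C_iff_isUnit_eval,
    ← isCoprime_X_sub_C_iff_isUnit_eval]
  exact and_congr (by rw [e₀, IsCoprime.add_mul_left_left_iff])
    (by rw [e₁, IsCoprime.add_mul_left_left_iff])

theorem isUnit_aeval_of_isCoprime {A : Type*} [Ring A] [Algebra R A] {a : A} {f p : R[X]}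
    (hfp : IsCoprime f p) (hp : aeval a p = 0) : IsUnit (aeval a f) := by
  obtain ⟨u, v, huv⟩ := hfp
  have hu : aeval a (u * f) = 1 := by
    rw [show u * f = 1 - v * p by linear_combination huv, map_sub, map_mul, hp, mul_zero,
      sub_zero, map_one]
  rw [map_mul] at hu
  refine ⟨⟨aeval a f, aeval a u, ?_, hu⟩, rfl⟩
  rwa [← map_mul, mul_comm, map_mul]

end Polynomial

theorem IsVeryClean.of_map {A B F : Type*} [Ring A] [Ring B] [FunLike F A B]
    [RingHomClass F A B] {f : F} (hf : Function.Injective f) {a : A}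
    (hcomm : ∀ b, Commute b (f a) → ∃ x, f x = b) (ha : IsVeryClean (f a)) : IsVeryClean a := by
  have isUnit_of_map {x : A} (hx : Commute x a) (hu : IsUnit (f x)) : IsUnit x := by
    obtain ⟨y, hy⟩ := hcomm _ (Commute.units_inv_left (u := hu.unit) (hx.map f))
    refine ⟨⟨x, y, hf ?_, hf ?_⟩, rfl⟩
    · rw [map_mul, hy, map_one, hu.mul_val_inv]
    · rw [map_mul, hy, map_one, hu.val_inv_mul]
  obtain ⟨_, he, hae, hu⟩ := ha
  obtain ⟨e, rfl⟩ := hcomm _ hae.symm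
  have hea : Commute e a := hf (by simpa only [map_mul] using hae.symm)
  refine ⟨e, hf (by rw [map_mul, he.eq]), hea.eq.symm, ?_⟩
  rcases hu with hu | hu
  · exact .inl (isUnit_of_map ((Commute.refl a).sub_left hea) (by rwa [map_sub]))
  · exact .inr (isUnit_of_map ((Commute.refl a).add_left hea) (by rwa [map_add]))

theorem isVeryClean_of_aeval_eq_zero {R A : Type*} [CommRing R] [Ring A] [Algebra R A] {a : A}
    {h₀ h₁ : R[X]} (hcop : IsCoprime h₀ h₁) (ha : aeval a (h₀ * h₁) = 0)
    (h0 : IsUnit (h₀.eval 0)) (h1 : IsUnit (h₁.eval 1) ∨ IsUnit (h₁.eval (-1))) :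
    IsVeryClean a := by
  obtain ⟨u, v, huv⟩ := hcop
  have hunit (s : R) (hs : IsUnit (h₁.eval s)) :
      IsUnit (a - algebraMap R A s * aeval a (u * h₀)) := by
    have hcop := (isCoprime_X_sub_C_mul_mul_iff s (dvd_mul_left h₀ u)
      ⟨v, by linear_combination -huv⟩).2 ⟨h0, hs⟩
    simpa using isUnit_aeval_of_isCoprime hcop ha
  refine ⟨aeval a (u * h₀), ?_, ?_, ?_⟩
  · rw [IsIdempotentElem, ← map_mul, show u * h₀ * (u * h₀) = u * h₀ - u * v * (h₀ * h₁) by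
      linear_combination u * h₀ * huv, map_sub, map_mul _ (u * v), ha, mul_zero, sub_zero]
  · simpa using ((commute_X (u * h₀)).map (aeval a)).eq
  · rcases h1 with hs | hs
    · exact .inl (by simpa using hunit 1 hs)
    · exact .inr (by simpa using hunit (-1) hs)

namespace Algebra

variable {R A : Type*} [CommRing R] [CommRing A] [Algebra R A] {a : A}

theorem eq_lmul_of_commute_lmul (ha : adjoin R {a} = ⊤) {E : Module.End R A}
    (hE : Commute E (lmul R A a)) : E = lmul R A (E 1) := by
  ext x
  have hx : x ∈ adjoin R {a} := ha ▸ mem_top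
  rw [adjoin_singleton_eq_range_aeval] at hx
  obtain ⟨p, rfl⟩ := hx
  have hEp : Commute E (lmul R A (aeval a p)) := by
    rw [← aeval_algHom_apply]
    exact commute_of_mem_adjoin_singleton_of_commute (aeval_mem_adjoin_singleton R _) hE
  calc E (aeval a p) = E (lmul R A (aeval a p) 1) := by simp
    _ = lmul R A (aeval a p) (E 1) := LinearMap.congr_fun hEp.eq 1
    _ = lmul R A (E 1) (aeval a p) := by simp [mul_comm]

theorem exists_leftMulMatrix_eq_of_commute {ι : Type*} [Fintype ι] [DecidableEq ι]
    (b : Module.Basis ι R A) (ha : adjoin R {a} = ⊤) {N : Matrix ι ι R}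
    (hN : Commute N (leftMulMatrix b a)) : ∃ x, leftMulMatrix b x = N := by
  let Φ := LinearMap.toMatrixAlgEquiv b
  have hΦ (x : A) : leftMulMatrix b x = Φ (lmul R A x) := rfl
  refine ⟨Φ.symm N 1, ?_⟩
  rw [hΦ, ← eq_lmul_of_commute_lmul ha, Φ.apply_symm_apply]
  simpa [hΦ] using hN.map Φ.symm

end Algebra

namespace AdjoinRoot

variable {R : Type*} [CommRing R] {h : R[X]}

theorem isCoprime_of_isUnit_mk {f : R[X]} (hf : IsUnit (mk h f)) : IsCoprime f h := by
  obtain ⟨g, hg⟩ := hf.exists_right_inv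
  obtain ⟨g, rfl⟩ := mk_surjective g
  obtain ⟨k, hk⟩ : h ∣ f * g - 1 := by
    rw [← mk_eq_zero, map_sub, map_mul, hg, map_one, sub_self]
  exact ⟨g, -k, by linear_combination hk⟩

theorem minpoly_root_of_monic (hh : h.Monic) : minpoly R (root h) = h :=
  .symm <| minpoly.unique' R (root h) hh (by rw [aeval_eq, mk_self]) fun q hq ↦
    or_iff_not_imp_left.2 fun hq0 hq' ↦
      hh.not_dvd_of_degree_lt hq0 hq (mk_eq_zero.1 (by rwa [aeval_eq] at hq'))

theorem charpoly_lmul_root [Module.Free R (AdjoinRoot h)] [Module.Finite R (AdjoinRoot h)]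
    (hh : h.Monic) : (Algebra.lmul R (AdjoinRoot h) (root h)).charpoly = h := by
  rw [← LinearMap.charpoly_toMatrix _ (powerBasis' hh).basis, ← Algebra.leftMulMatrix_apply,
    ← powerBasis'_gen hh, charpoly_leftMulMatrix, powerBasis'_gen, minpoly_root_of_monic hh]

theorem charpoly_leftMulMatrix_root {ι : Type*} [Fintype ι] [DecidableEq ι] (hh : h.Monic)
    (b : Module.Basis ι R (AdjoinRoot h)) : (Algebra.leftMulMatrix b (root h)).charpoly = h := by
  have := hh.free_adjoinRoot
  have := hh.finite_adjoinRoot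
  rw [Algebra.leftMulMatrix_apply, LinearMap.charpoly_toMatrix, charpoly_lmul_root hh]

theorem exists_monic_dvd_of_isIdempotentElem [IsLocalRing R] (hh : h.Monic) {q : R[X]}
    (hq : IsIdempotentElem (mk h q)) :
    ∃ h₀ h₁ : R[X], h₀.Monic ∧ h₁.Monic ∧ h = h₀ * h₁ ∧ h₀ ∣ q ∧ h₁ ∣ 1 - q := by
  have := hh.free_adjoinRoot
  have := hh.finite_adjoinRoot
  let L := Algebra.lmul R (AdjoinRoot h)
  obtain ⟨p₀, p₁, hm₀, hm₁, hchar, hp₀, hp₁⟩ :=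
    Module.End.exists_charpoly_eq_mul_of_isIdempotentElem (hq.map L) ((Commute.all _ _).map L)
  rw [charpoly_lmul_root hh] at hchar
  have dvd_of_aeval {p r : R[X]} (hpr : aeval (L (root h)) p * L (mk h r) = 0) : h ∣ p * r := by
    rw [aeval_algHom_apply, aeval_eq, ← map_mul] at hpr
    rw [← mk_eq_zero, map_mul]
    simpa [L] using LinearMap.congr_fun hpr 1
  obtain ⟨k₀, hk₀⟩ := dvd_of_aeval (r := 1 - q) (by simpa using hp₀)
  obtain ⟨k₁, hk₁⟩ := dvd_of_aeval hp₁
  refine ⟨p₀, p₁, hm₀, hm₁, hchar, ⟨k₁, hm₁.isRegular.left ?_⟩, ⟨k₀, hm₀.isRegular.left ?_⟩⟩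
  · linear_combination hk₁ + hchar * k₁
  · linear_combination hk₀ + hchar * k₀

theorem exists_factorization_of_isVeryClean_root [IsLocalRing R] (hh : h.Monic)
    (hroot : IsVeryClean (root h)) :
    ∃ h₀ h₁ : R[X], h = h₀ * h₁ ∧ IsCoprime h₀ h₁ ∧ h₀.Monic ∧ IsUnit (h₀.eval 0) ∧
      h₁.Monic ∧ (IsUnit (h₁.eval 1) ∨ IsUnit (h₁.eval (-1))) := by
  obtain ⟨ε, hε, -, hunit⟩ := hroot
  obtain ⟨q, rfl⟩ := mk_surjective ε
  obtain ⟨h₀, h₁, hm₀, hm₁, hh₀₁, hq₀, hq₁⟩ := exists_monic_dvd_of_isIdempotentElem hh hε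
  have hunits (s : R) (hs : IsUnit (mk h (X - C s * q))) :
      IsUnit (h₀.eval 0) ∧ IsUnit (h₁.eval s) :=
    (isCoprime_X_sub_C_mul_mul_iff s hq₀ hq₁).1 (hh₀₁ ▸ isCoprime_of_isUnit_mk hs)
  obtain ⟨k₀, hk₀⟩ := hq₀
  obtain ⟨k₁, hk₁⟩ := hq₁
  refine ⟨h₀, h₁, hh₀₁, ⟨k₀, k₁, by linear_combination -hk₀ - hk₁⟩, hm₀, ?_⟩
  rcases hunit with hu | hu
  · have := hunits 1 (by simpa using hu)
    exact ⟨this.1, hm₁, .inl this.2⟩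
  · have := hunits (-1) (by simpa using hu)
    exact ⟨this.1, hm₁, .inr this.2⟩

end AdjoinRoot

theorem very_clean_charpoly_criterion_general (R : Type*) [CommRing R] [IsLocalRing R]
    (n : ℕ) (h : Polynomial R) (hmonic : h.Monic) (hdeg : h.natDegree = n) :
    (∀ φ : Matrix (Fin n) (Fin n) R, φ.charpoly = h → IsVeryClean φ) ↔
      ∃ h₀ h₁ : Polynomial R, h = h₀ * h₁ ∧
        Ideal.span {h₀, h₁} = (⊤ : Ideal (Polynomial R)) ∧
        h₀.Monic ∧ IsUnit (h₀.eval 0) ∧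
        h₁.Monic ∧ (IsUnit (h₁.eval 1) ∨ IsUnit (h₁.eval (-1))) := by
  have span_eq_top_iff (a b : R[X]) : Ideal.span {a, b} = ⊤ ↔ IsCoprime a b := by
    rw [Ideal.eq_top_iff_one, Ideal.mem_span_pair, IsCoprime]
  simp_rw [span_eq_top_iff]
  constructor
  · intro hVC
    let b := (AdjoinRoot.powerBasis' hmonic).basis.reindex
      (finCongr ((AdjoinRoot.powerBasis'_dim hmonic).trans hdeg))
    refine AdjoinRoot.exists_factorization_of_isVeryClean_root hmonic
      (.of_map (Algebra.leftMulMatrix_injective b) (fun _ ↦ ?_) (hVC _ ?_))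
    · exact Algebra.exists_leftMulMatrix_eq_of_commute b AdjoinRoot.adjoinRoot_eq_top
    · exact AdjoinRoot.charpoly_leftMulMatrix_root hmonic b
  · rintro ⟨h₀, h₁, rfl, hcop, -, h0, -, h1⟩ φ hφ
    exact isVeryClean_of_aeval_eq_zero hcop (hφ ▸ Matrix.aeval_self_charpoly φ) h0 h1

theorem very_clean_charpoly_criterion (R : Type*) [CommRing R] [IsLocalRing R]
    (n : ℕ) (hn : 2 ≤ n) (h : Polynomial R) (hmonic : h.Monic) (hdeg : h.natDegree = n) :
    (∀ φ : Matrix (Fin n) (Fin n) R, φ.charpoly = h → IsVeryClean φ) ↔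
      ∃ h₀ h₁ : Polynomial R, h = h₀ * h₁ ∧
        Ideal.span {h₀, h₁} = (⊤ : Ideal (Polynomial R)) ∧
        h₀.Monic ∧ IsUnit (h₀.eval 0) ∧
        h₁.Monic ∧ (IsUnit (h₁.eval 1) ∨ IsUnit (h₁.eval (-1))) :=
  very_clean_charpoly_criterion_general R n h hmonic hdeg
end

section
/- Let R be a commutative local ring and let h ∈ R[t] be a monic polynomial of degree 2. Then the following are equivalent: (1) every matrix φ ∈ M_2(R) with characteristic polynomial equal to h is very clean; (2) there exists a factorization h = h_0 h_1 such that h_0 is monic with h_0(0) a unit, and h_1 is monic with h_1(1) a unit or h_1(−1) a unit. -/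
/-!
Over a local ring the determinant of an idempotent 2×2 matrix `e` is an idempotent scalar, so `e`
is `0`, `1`, or of rank one (trace `1`, determinant `0`). A matrix `φ` commuting with a rank-one
idempotent `e` satisfies `φ e = e φ e = tr(e φ) e`, hence `φ = a e + b (1 - e)`; then
`χ(φ) = (t - a)(t - b)` and `det(φ ∓ e) = (a ∓ 1) b`, which is the required factorization.
Conversely, if `χ(φ) = (t - b)(t - a)` with `a - b` a unit, Cayley–Hamilton makes
`e = (φ - b)/(a - b)` an idempotent with `φ = a e + b (1 - e)`; if `a - b` is not a unit, then `a`
is a unit along with `b` and `φ` is invertible. Factorizations with a constant factor correspond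
to `e = 0` and `e = 1`.
-/

open Polynomial Matrix IsLocalRing

theorem Polynomial.Monic.exists_eq_X_sub_C {R : Type*} [CommRing R] {p : R[X]} (hp : p.Monic)
    (hdeg : p.natDegree = 1) : ∃ b, p = X - C b :=
  ⟨-p.coeff 0, by rw [C_neg, sub_neg_eq_add, ← hp.eq_X_add_C hdeg]⟩

theorem IsLocalRing.eq_zero_or_eq_one_of_isIdempotentElem {R : Type*} [CommRing R]
    [IsLocalRing R] {d : R} (hd : IsIdempotentElem d) : d = 0 ∨ d = 1 := by
  rcases isUnit_or_isUnit_one_sub_self d with hu | hu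
  · exact Or.inr ((IsIdempotentElem.iff_eq_one_of_isUnit hu).mp hd)
  · exact Or.inl (by simpa using (IsIdempotentElem.iff_eq_one_of_isUnit hu).mp hd.one_sub)

section Algebra

variable {R A : Type*} [CommRing R] [Ring A] [Algebra R A]

theorem isVeryClean_of_isUnit {φ : A} (hφ : IsUnit φ) : IsVeryClean φ :=
  ⟨0, .zero, by simp, Or.inl (by simpa using hφ)⟩

theorem IsIdempotentElem.isUnit_smul_add_smul_one_sub {e : A} (he : IsIdempotentElem e)
    {x y : R} (hx : IsUnit x) (hy : IsUnit y) : IsUnit (x • e + y • (1 - e)) := by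
  obtain ⟨u, rfl⟩ := hx
  obtain ⟨v, rfl⟩ := hy
  have h₁ : e * (1 - e) = 0 := by rw [mul_sub, mul_one, he.eq, sub_self]
  have h₂ : (1 - e) * e = 0 := by rw [sub_mul, one_mul, he.eq, sub_self]
  have h₃ : (1 - e) * (1 - e) = 1 - e := he.one_sub.eq
  refine ⟨⟨_, (↑u⁻¹ : R) • e + (↑v⁻¹ : R) • (1 - e), ?_, ?_⟩, rfl⟩ <;>
    simp only [add_mul, mul_add, smul_mul_smul_comm, h₁, h₂, h₃, he.eq, Units.mul_inv,
      Units.inv_mul, one_smul, smul_zero, add_zero, zero_add, add_sub_cancel]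

theorem isVeryClean_smul_add_smul_one_sub {e : A} (he : IsIdempotentElem e) {a b : R}
    (hb : IsUnit b) (ha : IsUnit (a - 1) ∨ IsUnit (a + 1)) :
    IsVeryClean (a • e + b • (1 - e)) := by
  refine ⟨e, he, by simp only [add_mul, mul_add, smul_mul_assoc, mul_smul_comm, sub_mul,
    mul_sub, one_mul, mul_one], ha.imp (fun h ↦ ?_) (fun h ↦ ?_)⟩
  · rw [show a • e + b • (1 - e) - e = (a - 1) • e + b • (1 - e) by module]
    exact he.isUnit_smul_add_smul_one_sub h hb
  · rw [show a • e + b • (1 - e) + e = (a + 1) • e + b • (1 - e) by module]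
    exact he.isUnit_smul_add_smul_one_sub h hb

theorem exists_isIdempotentElem_eq_smul_add_smul_one_sub {φ : A} {a b : R}
    (hφ : (φ - algebraMap R A b) * (φ - algebraMap R A a) = 0) (hab : IsUnit (a - b)) :
    ∃ e : A, IsIdempotentElem e ∧ φ = a • e + b • (1 - e) := by
  obtain ⟨u, hu⟩ := hab
  have hsq : (φ - algebraMap R A b) * (φ - algebraMap R A b) =
      (a - b) • (φ - algebraMap R A b) := by
    have hsplit : φ - algebraMap R A b = φ - algebraMap R A a + (a - b) • 1 := by
      simp only [Algebra.algebraMap_eq_smul_one]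
      module
    nth_rw 2 [hsplit]
    rw [mul_add, hφ, zero_add, mul_smul_comm, mul_one]
  refine ⟨(↑u⁻¹ : R) • (φ - algebraMap R A b), ?_, ?_⟩
  · rw [IsIdempotentElem, smul_mul_smul_comm, hsq, smul_smul, ← hu, mul_assoc, u.inv_mul,
      mul_one]
  · have hu' : (a - b) * ↑u⁻¹ = 1 := by rw [← hu, u.mul_inv]
    simp only [Algebra.algebraMap_eq_smul_one]
    linear_combination (norm := module) -hu' • (φ - b • (1 : A))

end Algebra

namespace Matrix

variable {R : Type*} [CommRing R]

section Charpoly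

variable {n : Type*} [Fintype n] [DecidableEq n] (M : Matrix n n R)

theorem isUnit_sub_scalar_iff_isUnit_eval_charpoly (r : R) :
    IsUnit (M - scalar n r) ↔ IsUnit (M.charpoly.eval r) := by
  rw [eval_charpoly, ← neg_sub, IsUnit.neg_iff, isUnit_iff_isUnit_det]

theorem isUnit_iff_isUnit_eval_charpoly_zero : IsUnit M ↔ IsUnit (M.charpoly.eval 0) := by
  rw [← isUnit_sub_scalar_iff_isUnit_eval_charpoly, map_zero, sub_zero]

theorem isUnit_sub_one_or_add_one_iff :
    IsUnit (M - 1) ∨ IsUnit (M + 1) ↔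
      IsUnit (M.charpoly.eval 1) ∨ IsUnit (M.charpoly.eval (-1)) := by
  rw [← isUnit_sub_scalar_iff_isUnit_eval_charpoly, ← isUnit_sub_scalar_iff_isUnit_eval_charpoly,
    map_one, map_neg, map_one, sub_neg_eq_add]

end Charpoly

theorem det_smul_one_add_smul_fin_two (s t : R) (M : Matrix (Fin 2) (Fin 2) R) :
    (s • 1 + t • M).det = s ^ 2 + s * t * M.trace + t ^ 2 * M.det := by
  simp only [det_fin_two, trace_fin_two, add_apply, smul_apply, smul_eq_mul, one_apply_eq,
    one_apply_ne zero_ne_one, one_apply_ne one_ne_zero]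
  ring

theorem det_one_sub_fin_two (M : Matrix (Fin 2) (Fin 2) R) :
    (1 - M).det = 1 - M.trace + M.det := by
  rw [sub_eq_add_neg, ← one_smul R (1 : Matrix _ _ R), ← neg_one_smul R M,
    det_smul_one_add_smul_fin_two]
  ring

-- the case `det A = 0` of the identity `A * B * A = tr(A * B) • A - det A • adj B`
theorem mul_mul_self_eq_trace_smul_of_det_eq_zero {A : Matrix (Fin 2) (Fin 2) R}
    (hA : A.det = 0) (B : Matrix (Fin 2) (Fin 2) R) : A * B * A = (A * B).trace • A := by
  rw [det_fin_two] at hA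
  ext i j
  fin_cases i <;> fin_cases j <;>
    simp only [Fin.zero_eta, Fin.mk_one, mul_apply, Fin.sum_univ_two, trace_fin_two, smul_apply,
      smul_eq_mul]
  · linear_combination -B 1 1 * hA
  · linear_combination B 0 1 * hA
  · linear_combination B 1 0 * hA
  · linear_combination -B 0 0 * hA

theorem mul_eq_trace_smul_of_commute {p φ : Matrix (Fin 2) (Fin 2) R} (hp : IsIdempotentElem p)
    (hdet : p.det = 0) (hφ : Commute φ p) : φ * p = (p * φ).trace • p := by
  rw [← mul_mul_self_eq_trace_smul_of_det_eq_zero hdet, ← hφ.eq, mul_assoc, hp.eq]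

section Idempotent

variable {e : Matrix (Fin 2) (Fin 2) R}

theorem eq_zero_or_eq_one_or_trace_eq_one_of_isIdempotentElem [IsLocalRing R]
    (he : IsIdempotentElem e) : e = 0 ∨ e = 1 ∨ (e.trace = 1 ∧ e.det = 0) := by
  have hdet : IsIdempotentElem e.det := by rw [IsIdempotentElem, ← det_mul, he.eq]
  have hdet' : IsIdempotentElem (1 - e).det := by
    rw [IsIdempotentElem, ← det_mul, he.one_sub.eq]
  rcases eq_zero_or_eq_one_of_isIdempotentElem hdet with h₀ | h₁
  · rcases eq_zero_or_eq_one_of_isIdempotentElem hdet' with h₀' | h₁'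
    · refine Or.inr (Or.inr ⟨?_, h₀⟩)
      rw [det_one_sub_fin_two, h₀] at h₀'
      linear_combination -h₀'
    · have hu : IsUnit (1 - e) := by rw [isUnit_iff_isUnit_det, h₁']; exact isUnit_one
      exact Or.inl (by simpa using (IsIdempotentElem.iff_eq_one_of_isUnit hu).mp he.one_sub)
  · have hu : IsUnit e := by rw [isUnit_iff_isUnit_det, h₁]; exact isUnit_one
    exact Or.inr (Or.inl ((IsIdempotentElem.iff_eq_one_of_isUnit hu).mp he))

variable (htr : e.trace = 1) (hdet : e.det = 0)
include htr hdet

theorem det_smul_add_smul_one_sub (x y : R) : (x • e + y • (1 - e)).det = x * y := by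
  rw [show x • e + y • (1 - e) = y • 1 + (x - y) • e by module,
    det_smul_one_add_smul_fin_two, htr, hdet]
  ring

theorem charpoly_smul_add_smul_one_sub [Nontrivial R] (x y : R) :
    (x • e + y • (1 - e)).charpoly = (X - C x) * (X - C y) := by
  rw [charpoly_fin_two, det_smul_add_smul_one_sub htr hdet]
  simp only [trace_add, trace_smul, trace_sub, trace_one, htr, Fintype.card_fin, Nat.cast_ofNat,
    smul_eq_mul, mul_one, map_add, map_mul, map_sub, map_one, map_ofNat]
  ring

theorem eq_smul_add_smul_one_sub_of_commute (he : IsIdempotentElem e)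
    {φ : Matrix (Fin 2) (Fin 2) R} (hφ : Commute φ e) :
    φ = (e * φ).trace • e + ((1 - e) * φ).trace • (1 - e) := by
  have hdet' : (1 - e).det = 0 := by rw [det_one_sub_fin_two, htr, hdet]; ring
  rw [← mul_eq_trace_smul_of_commute he hdet hφ,
    ← mul_eq_trace_smul_of_commute he.one_sub hdet' ((Commute.one_right φ).sub_right hφ),
    ← mul_add, add_sub_cancel, mul_one]

end Idempotent

theorem exists_charpoly_eq_fin_two [Nontrivial R] {h : R[X]} (hm : h.Monic)
    (hdeg : h.natDegree = 2) : ∃ φ : Matrix (Fin 2) (Fin 2) R, φ.charpoly = h := by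
  refine ⟨!![0, -h.coeff 0; 1, -h.coeff 1], ?_⟩
  rw [charpoly_fin_two, hm.as_sum, hdeg]
  simp [trace_fin_two, det_fin_two, Finset.sum_range_succ]
  ring

end Matrix

section LocalRing

variable {R : Type*} [CommRing R] [IsLocalRing R]

theorem exists_factorization_charpoly_of_isVeryClean {φ : Matrix (Fin 2) (Fin 2) R}
    (hφ : IsVeryClean φ) :
    ∃ h₀ h₁ : R[X], φ.charpoly = h₀ * h₁ ∧ h₀.Monic ∧ IsUnit (h₀.eval 0) ∧
      h₁.Monic ∧ (IsUnit (h₁.eval 1) ∨ IsUnit (h₁.eval (-1))) := by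
  obtain ⟨e, he, hcomm, hunit⟩ := hφ
  rcases eq_zero_or_eq_one_or_trace_eq_one_of_isIdempotentElem he with rfl | rfl | ⟨htr, hdet⟩
  · refine ⟨φ.charpoly, 1, (mul_one _).symm, charpoly_monic φ, ?_, monic_one, by simp⟩
    rw [← isUnit_iff_isUnit_eval_charpoly_zero]
    simpa using hunit
  · exact ⟨1, φ.charpoly, (one_mul _).symm, monic_one, by simp, charpoly_monic φ,
      (isUnit_sub_one_or_add_one_iff φ).mp hunit⟩
  · set a := (e * φ).trace
    set b := ((1 - e) * φ).trace
    have hφe := eq_smul_add_smul_one_sub_of_commute htr hdet he hcomm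
    have hab : IsUnit ((a - 1) * b) ∨ IsUnit ((a + 1) * b) := by
      rw [← det_smul_add_smul_one_sub htr hdet, ← det_smul_add_smul_one_sub htr hdet,
        ← isUnit_iff_isUnit_det, ← isUnit_iff_isUnit_det]
      convert hunit using 2 <;> rw [hφe] <;> module
    refine ⟨X - C b, X - C a, ?_, monic_X_sub_C b, ?_, monic_X_sub_C a, ?_⟩
    · rw [hφe, charpoly_smul_add_smul_one_sub htr hdet, mul_comm]
    · rcases hab with h | h <;> simpa using (isUnit_of_mul_isUnit_right h).neg
    · simp only [eval_sub, eval_X, eval_C, ← neg_sub a, IsUnit.neg_iff, sub_neg_eq_add]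
      exact hab.imp isUnit_of_mul_isUnit_left isUnit_of_mul_isUnit_left

theorem isVeryClean_of_charpoly_eq_X_sub_C_mul {φ : Matrix (Fin 2) (Fin 2) R} {a b : R}
    (hfac : φ.charpoly = (X - C b) * (X - C a)) (hb : IsUnit b)
    (ha : IsUnit (a - 1) ∨ IsUnit (a + 1)) : IsVeryClean φ := by
  by_cases hab : IsUnit (a - b)
  · have hCH : (φ - algebraMap R _ b) * (φ - algebraMap R _ a) = 0 := by
      simpa [hfac] using aeval_self_charpoly φ
    obtain ⟨e, he, rfl⟩ := exists_isIdempotentElem_eq_smul_add_smul_one_sub hCH hab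
    exact isVeryClean_smul_add_smul_one_sub he hb ha
  · have ha' : IsUnit a := by
      by_contra ha'
      rw [← neg_sub, IsUnit.neg_iff] at hab
      exact nonunits_add hab ha' (by rwa [sub_add_cancel])
    apply isVeryClean_of_isUnit
    rw [isUnit_iff_isUnit_eval_charpoly_zero, hfac]
    simpa using hb.mul ha'

theorem isVeryClean_of_charpoly_eq_mul {φ : Matrix (Fin 2) (Fin 2) R} {h₀ h₁ : R[X]}
    (hfac : φ.charpoly = h₀ * h₁) (hm₀ : h₀.Monic) (hu₀ : IsUnit (h₀.eval 0)) (hm₁ : h₁.Monic)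
    (hu₁ : IsUnit (h₁.eval 1) ∨ IsUnit (h₁.eval (-1))) : IsVeryClean φ := by
  have hdeg : h₀.natDegree + h₁.natDegree = 2 := by
    rw [← hm₀.natDegree_mul hm₁, ← hfac, charpoly_natDegree_eq_dim, Fintype.card_fin]
  rcases (by omega : h₀.natDegree = 0 ∨ h₀.natDegree = 1 ∧ h₁.natDegree = 1 ∨ h₁.natDegree = 0)
    with hd₀ | ⟨hd₀, hd₁⟩ | hd₁
  · rw [hm₀.natDegree_eq_zero.mp hd₀, one_mul] at hfac
    exact ⟨1, .one, by simp, (isUnit_sub_one_or_add_one_iff φ).mpr (hfac ▸ hu₁)⟩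
  · obtain ⟨b, rfl⟩ := hm₀.exists_eq_X_sub_C hd₀
    obtain ⟨a, rfl⟩ := hm₁.exists_eq_X_sub_C hd₁
    refine isVeryClean_of_charpoly_eq_X_sub_C_mul hfac (by simpa using hu₀) ?_
    simpa only [eval_sub, eval_X, eval_C, ← neg_sub a, IsUnit.neg_iff, sub_neg_eq_add] using hu₁
  · rw [hm₁.natDegree_eq_zero.mp hd₁, mul_one] at hfac
    exact isVeryClean_of_isUnit ((isUnit_iff_isUnit_eval_charpoly_zero φ).mpr (hfac ▸ hu₀))

end LocalRing

theorem very_clean_charpoly_criterion_deg_two (R : Type*) [CommRing R] [IsLocalRing R]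
    (h : Polynomial R) (hmonic : h.Monic) (hdeg : h.natDegree = 2) :
    (∀ φ : Matrix (Fin 2) (Fin 2) R, φ.charpoly = h → IsVeryClean φ) ↔
      ∃ h₀ h₁ : Polynomial R, h = h₀ * h₁ ∧
        h₀.Monic ∧ IsUnit (h₀.eval 0) ∧
        h₁.Monic ∧ (IsUnit (h₁.eval 1) ∨ IsUnit (h₁.eval (-1))) := by
  constructor
  · intro H
    obtain ⟨φ, hφ⟩ := exists_charpoly_eq_fin_two hmonic hdeg
    simpa only [hφ] using exists_factorization_charpoly_of_isVeryClean (H φ hφ)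
  · rintro ⟨h₀, h₁, rfl, hm₀, hu₀, hm₁, hu₁⟩ φ hφ
    exact isVeryClean_of_charpoly_eq_mul hφ hm₀ hu₀ hm₁ hu₁
end

section
/- Let R be a commutative local ring and let A(x) ∈ M_2(R[[x]]) be a 2×2 matrix with power series entries, with A(0) ∈ M_2(R) the matrix of constant coefficients. Then A(x) is very clean in M_2(R[[x]]) if and only if A(0) is very clean in M_2(R). -/
open PowerSeries Matrix

theorem IsVeryClean.map {R S F : Type*} [Ring R] [Ring S] [FunLike F R S]
    [RingHomClass F R S] (f : F) {a : R} (h : IsVeryClean a) : IsVeryClean (f a) := by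
  obtain ⟨e, he, hc, hu⟩ := h
  refine ⟨f e, he.map f, by rw [← map_mul, hc, map_mul], ?_⟩
  rw [← map_sub, ← map_add]
  exact hu.imp (IsUnit.map f) (IsUnit.map f)

theorem IsLocalRing.eq_zero_or_eq_one_of_isIdempotentElem_s15 {R : Type*} [Ring R]
    [IsLocalRing R] {a : R} (h : IsIdempotentElem a) : a = 0 ∨ a = 1 := by
  rcases IsLocalRing.isUnit_or_isUnit_of_isUnit_add (a := a) (b := 1 - a) (by simp) with
    hu | hu
  · exact Or.inr ((IsIdempotentElem.iff_eq_one_of_isUnit hu).mp h)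
  · exact Or.inl (by simpa using (IsIdempotentElem.iff_eq_one_of_isUnit hu).mp h.one_sub)

theorem Matrix.isUnit_iff_isUnit_map_constantCoeff {n R : Type*} [Fintype n] [DecidableEq n]
    [CommRing R] (B : Matrix n n R⟦X⟧) : IsUnit B ↔ IsUnit (B.map constantCoeff) := by
  rw [isUnit_iff_isUnit_det, isUnit_iff_isUnit_det, ← RingHom.mapMatrix_apply,
    ← RingHom.map_det, isUnit_iff_constantCoeff]

theorem PowerSeries.exists_root_of_quadratic {R : Type*} [CommRing R] (b c : R⟦X⟧) {a₀ : R}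
    (h₀ : a₀ * a₀ + constantCoeff b * a₀ + constantCoeff c = 0)
    (h₁ : IsUnit (2 * a₀ + constantCoeff b)) :
    ∃ a : R⟦X⟧, a * a + b * a + c = 0 ∧ constantCoeff a = a₀ := by
  set f : Polynomial R⟦X⟧ := Polynomial.X ^ 2 + (Polynomial.C b * Polynomial.X + Polynomial.C c)
  have hmem {φ : R⟦X⟧} : φ ∈ Ideal.span {X} ↔ constantCoeff φ = 0 := by
    rw [Ideal.mem_span_singleton, X_dvd_iff]
  obtain ⟨a, hroot, ha⟩ := HenselianRing.is_henselian f
    (Polynomial.monic_X_pow_add Polynomial.degree_linear_lt) (C a₀)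
    (hmem.mpr (by simpa [f, sq, add_assoc] using h₀))
    ((isUnit_iff_constantCoeff.mpr <| by simpa [f, one_add_one_eq_two, map_ofNat] using h₁).map _)
  refine ⟨a, by simpa [f, sq, Polynomial.IsRoot, add_assoc] using hroot, ?_⟩
  simpa [sub_eq_zero] using hmem.mp ha

section TwoByTwo

variable {T : Type*} [CommRing T]

theorem Matrix.mul_self_fin_two (M : Matrix (Fin 2) (Fin 2) T) :
    M * M = M.trace • M - M.det • 1 := by
  ext i j
  fin_cases i <;> fin_cases j <;>
    simp [mul_apply, trace_fin_two, det_fin_two, Fin.sum_univ_two] <;> ring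

theorem Matrix.det_add_fin_two (M N : Matrix (Fin 2) (Fin 2) T) :
    (M + N).det = M.det + N.det + M.trace * N.trace - (M * N).trace := by
  simp only [det_fin_two, trace_fin_two, add_apply, mul_apply, Fin.sum_univ_two]
  ring

theorem IsIdempotentElem.det_eq_zero_and_trace_eq_one_or_eq_zero_or_eq_one [IsLocalRing T]
    {e : Matrix (Fin 2) (Fin 2) T} (he : IsIdempotentElem e) :
    e.det = 0 ∧ e.trace = 1 ∨ e = 0 ∨ e = 1 := by
  have hdet : IsIdempotentElem e.det := by rw [IsIdempotentElem, ← det_mul, he.eq]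
  rcases IsLocalRing.eq_zero_or_eq_one_of_isIdempotentElem_s15 hdet with hdet0 | hdet1
  · have he_eq : e = e.trace • e := by
      simpa [hdet0] using he.eq.symm.trans (mul_self_fin_two e)
    have htr : IsIdempotentElem e.trace := by
      rw [IsIdempotentElem, ← smul_eq_mul, ← trace_smul, ← he_eq]
    rcases IsLocalRing.eq_zero_or_eq_one_of_isIdempotentElem_s15 htr with htr0 | htr1
    · exact Or.inr (Or.inl (by rw [he_eq, htr0, zero_smul]))
    · exact Or.inl ⟨hdet0, htr1⟩
  · have hunit : IsUnit e := (isUnit_iff_isUnit_det e).mpr (hdet1 ▸ isUnit_one)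
    exact Or.inr (Or.inr ((IsIdempotentElem.iff_eq_one_of_isUnit hunit).mp he))

theorem Matrix.det_add_smul_of_commute_of_isIdempotentElem
    {M e : Matrix (Fin 2) (Fin 2) T} (he : IsIdempotentElem e) (hdet : e.det = 0)
    (htr : e.trace = 1) (hMe : Commute M e) (s : T) :
    (M + s • e).det = (M.trace - (M * e).trace) * ((M * e).trace + s) := by
  -- `M * e` has determinant zero and `(M * e) ^ 2 = M ^ 2 * e`; comparing traces of the two
  -- Cayley–Hamilton expansions of this square gives `det M`.
  have hsq : (M * e) * (M * e) = (M * e).trace • (M * e) := by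
    simpa [det_mul, hdet] using mul_self_fin_two (M * e)
  have hsq' : (M * e) * (M * e) = M.trace • (M * e) - M.det • e := by
    rw [mul_assoc M e, ← mul_assoc e M e, ← hMe.eq, mul_assoc M e e, he.eq, ← mul_assoc,
      mul_self_fin_two, sub_mul, Matrix.smul_mul, Matrix.smul_mul, one_mul]
  have hMdet : M.det = (M.trace - (M * e).trace) * (M * e).trace := by
    have := congrArg trace (hsq.symm.trans hsq')
    simp only [trace_sub, trace_smul, htr, smul_eq_mul, mul_one] at this
    linear_combination this
  rw [det_add_fin_two, det_smul, hdet, trace_smul, Matrix.mul_smul, trace_smul, htr, hMdet]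
  simp only [smul_eq_mul]
  ring

theorem Matrix.exists_isIdempotentElem_commute_of_trace_eq_add_of_det_eq_mul
    (M : Matrix (Fin 2) (Fin 2) T) {ρ₀ ρ₁ : T} (hsum : M.trace = ρ₀ + ρ₁)
    (hprod : M.det = ρ₀ * ρ₁) (hu : IsUnit (ρ₁ - ρ₀)) :
    ∃ E : Matrix (Fin 2) (Fin 2) T, IsIdempotentElem E ∧ Commute M E ∧
      E.det = 0 ∧ E.trace = 1 ∧ (M * E).trace = ρ₁ := by
  obtain ⟨w, hw⟩ := isUnit_iff_exists_inv.mp hu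
  set N := M - ρ₀ • (1 : Matrix (Fin 2) (Fin 2) T)
  have hN : N * N = (ρ₁ - ρ₀) • N := by
    simp only [N, sub_mul, mul_sub, Matrix.smul_mul, Matrix.mul_smul, one_mul, mul_one, smul_smul,
      mul_self_fin_two M, hsum, hprod]
    module
  refine ⟨w • N, ?_, ?_, ?_, ?_, ?_⟩
  · rw [IsIdempotentElem, Matrix.smul_mul, Matrix.mul_smul, hN, smul_smul, smul_smul]
    congr 1
    linear_combination w * hw
  · exact ((Commute.refl M).sub_right ((Commute.one_right M).smul_right ρ₀)).smul_right w
  · rw [det_smul]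
    simp only [N, det_fin_two, trace_fin_two, sub_apply, smul_apply, smul_eq_mul, Fin.isValue,
      one_apply_eq, one_apply_ne zero_ne_one, one_apply_ne one_ne_zero, mul_one, mul_zero,
      sub_zero, Fintype.card_fin] at hsum hprod ⊢
    linear_combination w ^ 2 * hprod - w ^ 2 * ρ₀ * hsum
  · rw [trace_smul, trace_sub, trace_smul, trace_one, hsum]
    simp only [Fintype.card_fin, Nat.cast_ofNat, smul_eq_mul]
    linear_combination hw
  · rw [Matrix.mul_smul, trace_smul, mul_sub, Matrix.mul_smul, mul_one, trace_sub, trace_smul,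
      mul_self_fin_two, trace_sub, trace_smul, trace_smul, trace_one, hsum, hprod]
    simp only [smul_eq_mul, Fintype.card_fin]
    linear_combination ρ₁ * hw

end TwoByTwo

section PowerSeriesMatrix

variable {R : Type*} [CommRing R] [IsLocalRing R]

theorem exists_isIdempotentElem_commute_isUnit_add_C_smul_of_det_eq_zero
    (A : Matrix (Fin 2) (Fin 2) R⟦X⟧) (σ : R) {e : Matrix (Fin 2) (Fin 2) R}
    (he : IsIdempotentElem e) (hdet : e.det = 0) (htr : e.trace = 1)
    (hAe : Commute (A.map constantCoeff) e) (hu : IsUnit (A.map constantCoeff + σ • e)) :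
    ∃ E : Matrix (Fin 2) (Fin 2) R⟦X⟧, IsIdempotentElem E ∧ Commute A E ∧
      IsUnit (A + C σ • E) := by
  set l₁ := (A.map constantCoeff * e).trace
  set l₀ := (A.map constantCoeff).trace - l₁
  have hdetA : (A.map constantCoeff).det = l₀ * l₁ := by
    simpa using det_add_smul_of_commute_of_isIdempotentElem he hdet htr hAe 0
  rw [isUnit_iff_isUnit_det,
    det_add_smul_of_commute_of_isIdempotentElem he hdet htr hAe] at hu
  obtain ⟨hl₀, -⟩ := IsUnit.mul_iff.mp hu
  have htrA : constantCoeff A.trace = (A.map constantCoeff).trace := AddMonoidHom.map_trace _ A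
  have hdetA' : constantCoeff A.det = (A.map constantCoeff).det := RingHom.map_det _ A
  by_cases hgap : IsUnit (l₁ - l₀)
  · -- `l₀, l₁` are the eigenvalues of `A(0)`; as `l₁ - l₀` is a unit, `l₀` is a simple root of
    -- its characteristic polynomial and lifts by Hensel's lemma to an eigenvalue `ρ₀` of `A`.
    obtain ⟨ρ₀, hroot, hρ₀⟩ := exists_root_of_quadratic (-A.trace) A.det (a₀ := l₀)
      (by simp only [map_neg, htrA, hdetA', hdetA, l₀]; ring)
      (by convert hgap.neg using 1; simp only [map_neg, htrA, l₀]; ring)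
    obtain ⟨E, hE, hAE, hEdet, hEtr, hAEtr⟩ :=
      exists_isIdempotentElem_commute_of_trace_eq_add_of_det_eq_mul A (ρ₀ := ρ₀)
        (ρ₁ := A.trace - ρ₀) (by ring) (by linear_combination hroot)
        (isUnit_iff_constantCoeff.mpr <| by
          convert hgap using 1
          simp only [map_sub, htrA, hρ₀, l₀]
          ring)
    refine ⟨E, hE, hAE, ?_⟩
    rw [isUnit_iff_isUnit_det, det_add_smul_of_commute_of_isIdempotentElem hE hEdet hEtr hAE, hAEtr,
      isUnit_iff_constantCoeff]
    convert hu using 1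
    simp only [map_mul, map_sub, map_add, constantCoeff_C, htrA, hρ₀, l₀]
    ring
  · have hl₁ : IsUnit l₁ := by
      refine (IsLocalRing.isUnit_or_isUnit_of_isUnit_add (a := l₀ - l₁) (b := l₁)
        (by simpa using hl₀)).resolve_left fun h => hgap ?_
      simpa using h.neg
    refine ⟨0, .zero, Commute.zero_right A, ?_⟩
    rw [smul_zero, add_zero, isUnit_iff_isUnit_map_constantCoeff, isUnit_iff_isUnit_det, hdetA]
    exact hl₀.mul hl₁

theorem exists_isIdempotentElem_commute_isUnit_add_C_smul
    (A : Matrix (Fin 2) (Fin 2) R⟦X⟧) (σ : R) {e : Matrix (Fin 2) (Fin 2) R}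
    (he : IsIdempotentElem e) (hAe : Commute (A.map constantCoeff) e)
    (hu : IsUnit (A.map constantCoeff + σ • e)) :
    ∃ E : Matrix (Fin 2) (Fin 2) R⟦X⟧, IsIdempotentElem E ∧ Commute A E ∧
      IsUnit (A + C σ • E) := by
  rcases he.det_eq_zero_and_trace_eq_one_or_eq_zero_or_eq_one with ⟨hdet, htr⟩ | rfl | rfl
  · exact exists_isIdempotentElem_commute_isUnit_add_C_smul_of_det_eq_zero
      A σ he hdet htr hAe hu
  · refine ⟨0, .zero, Commute.zero_right A, ?_⟩
    simpa [isUnit_iff_isUnit_map_constantCoeff A] using hu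
  · refine ⟨1, .one, Commute.one_right A, ?_⟩
    rw [isUnit_iff_isUnit_map_constantCoeff]
    convert hu using 1
    ext i j
    by_cases hij : i = j <;> simp [one_apply, hij]

end PowerSeriesMatrix

theorem M2_powerSeries_very_clean_iff_comm (R : Type*) [CommRing R] [IsLocalRing R]
    (A : Matrix (Fin 2) (Fin 2) (PowerSeries R)) :
    IsVeryClean A ↔ IsVeryClean (A.map PowerSeries.constantCoeff) := by
  refine ⟨fun h => h.map (constantCoeff (R := R)).mapMatrix, ?_⟩
  rintro ⟨e, he, hAe, hu | hu⟩
  · obtain ⟨E, hE, hAE, hEu⟩ := exists_isIdempotentElem_commute_isUnit_add_C_smul A (-1) he hAe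
      (by rwa [neg_one_smul, ← sub_eq_add_neg])
    refine ⟨E, hE, hAE, Or.inl ?_⟩
    rwa [map_neg, map_one, neg_one_smul, ← sub_eq_add_neg] at hEu
  · obtain ⟨E, hE, hAE, hEu⟩ := exists_isIdempotentElem_commute_isUnit_add_C_smul A 1 he hAe
      (by rwa [one_smul])
    exact ⟨E, hE, hAE, Or.inr (by rwa [map_one, one_smul] at hEu)⟩
end
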